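/- arXiv:1905.05660 — 11 statements merged into one kernel-verified Lean document; each statement's English description precedes it below -/
import Mathlib

section
/- Let H be a real Hilbert space, let T : H → H be a cutter, let α ∈ (0,2], and let ρ : H → (0,∞). Define U : H → H by U(x) := x + α β(x)(T(x) − x), where β(x) := (ρ(x) + ‖T(x) − x‖)/‖T(x) − x‖ if T(x) ≠ x, and β(x) := 0 otherwise. If x ∉ Fix T and the closed ball B(y, ρ(x)) is contained in Fix T, then ‖U(x) − y‖² ≤ ‖x − y‖² − ((2 − α)/α) ‖U(x) − x‖². -/
open scoped RealInnerProductSpace Classical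

/-- Lemma 2.1: the overrelaxed cutter step decreases the distance to points `y` whose
ball `B(y, ρ(x))` lies in `Fix T`. -/
theorem stmt1 {H : Type*} [NormedAddCommGroup H] [InnerProductSpace ℝ H] [CompleteSpace H]
    (T : H → H) (hfixne : ∃ z, T z = z)
    (hT : ∀ x z, T z = z → ⟪x - T x, z - T x⟫ ≤ 0)
    (α : ℝ) (hα : 0 < α ∧ α ≤ 2)
    (ρ : H → ℝ) (hρ : ∀ x, 0 < ρ x)
    (U : H → H)
    (hU : ∀ x, U x =
      x + (α * if T x ≠ x then (ρ x + ‖T x - x‖) / ‖T x - x‖ else 0) • (T x - x))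
    (x y : H) (hx : T x ≠ x)
    (hball : Metric.closedBall y (ρ x) ⊆ {z | T z = z}) :
    ‖U x - y‖ ^ 2 ≤ ‖x - y‖ ^ 2 - (2 - α) / α * ‖U x - x‖ ^ 2 := by
  obtain ⟨hα0, hα2⟩ := hα
  set v : H := T x - x with hv
  have hd : 0 < ‖v‖ := by
    rw [norm_pos_iff]
    intro h
    exact hx (sub_eq_zero.mp h)
  set d : ℝ := ‖v‖ with hdd
  have hρx := hρ x
  set z : H := y - (ρ x / d) • v with hz
  have hzmem : z ∈ Metric.closedBall y (ρ x) := by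
    simp only [Metric.mem_closedBall, dist_eq_norm, hz]
    have : y - (ρ x / d) • v - y = -((ρ x / d) • v) := by abel
    rw [this, norm_neg, norm_smul, Real.norm_eq_abs, abs_of_pos (by positivity)]
    rw [div_mul_cancel₀ _ (ne_of_gt hd)]
  have hzfix : T z = z := hball hzmem
  have h1 := hT x z hzfix
  have hxT : x - T x = -v := by rw [hv]; abel
  have hzT : z - T x = (y - x) - (ρ x / d) • v - v := by rw [hz, hv]; abel
  rw [hxT, hzT] at h1
  have hvv : ⟪v, v⟫ = d ^ 2 := real_inner_self_eq_norm_sq v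
  have key : ⟪v, x - y⟫ ≤ -((ρ x + d) * d) := by
    have hexp : ⟪-v, (y - x) - (ρ x / d) • v - v⟫
        = -⟪v, y - x⟫ + (ρ x / d) * ⟪v, v⟫ + ⟪v, v⟫ := by
      rw [inner_neg_left, inner_sub_right, inner_sub_right, real_inner_smul_right]
      ring
    rw [hexp, hvv] at h1
    have hiq : ⟪v, x - y⟫ = -⟪v, y - x⟫ := by
      rw [← inner_neg_right]; congr 1; abel
    rw [hiq]
    have hρd : ρ x / d * d ^ 2 = ρ x * d := by
      field_simp
    nlinarith [h1]
  set b : ℝ := (ρ x + d) / d with hb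
  have hbpos : 0 < b := by positivity
  have hbd : b * d = ρ x + d := div_mul_cancel₀ _ (ne_of_gt hd)
  have hUx : U x = x + (α * b) • v := by
    rw [hU x, if_pos hx]
  have hUy : U x - y = (x - y) + (α * b) • v := by rw [hUx]; abel
  have hUxx : U x - x = (α * b) • v := by rw [hUx]; abel
  have hn1 : ‖U x - y‖ ^ 2 = ‖x - y‖ ^ 2 + 2 * (α * b) * ⟪x - y, v⟫ + (α * b) ^ 2 * d ^ 2 := by
    rw [hUy, norm_add_sq_real, real_inner_smul_right, norm_smul, Real.norm_eq_abs,
      mul_pow, sq_abs]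
    ring
  have hn2 : ‖U x - x‖ ^ 2 = (α * b) ^ 2 * d ^ 2 := by
    rw [hUxx, norm_smul, Real.norm_eq_abs, mul_pow, sq_abs]
  rw [hn1, hn2]
  have hdiv : (2 - α) / α * ((α * b) ^ 2 * d ^ 2) = (2 - α) * α * (b ^ 2 * d ^ 2) := by
    field_simp
  rw [hdiv]
  have hsym : ⟪x - y, v⟫ = ⟪v, x - y⟫ := real_inner_comm _ _
  rw [hsym]
  have hkey2 : ⟪v, x - y⟫ ≤ -(b * d * d) := by
    rw [hbd]; nlinarith [key]
  nlinarith [mul_le_mul_of_nonneg_left hkey2 (by positivity : (0:ℝ) ≤ 2 * (α * b)),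
    sq_nonneg (b * d), mul_pos hα0 hbpos, hd]
end

section
/- Let H be a real Hilbert space, let T : H → H be a cutter, let ρ > 0, let x ∈ H with T(x) ≠ x, and let y ∈ H be such that the closed ball B(y, ρ) is contained in Fix T. Then the vector u := T(x) − y + ρ (T(x) − x)/‖T(x) − x‖ satisfies ‖u‖² ≤ ‖x − y‖² − (ρ + ‖T(x) − x‖)². -/
open scoped RealInnerProductSpace

/-- The key inequality from the proof of Lemma 2.1: the vector
`u := T x − y + ρ (T x − x)/‖T x − x‖` satisfies `‖u‖² ≤ ‖x − y‖² − (ρ + ‖T x − x‖)²`. -/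
theorem stmt2 {H : Type*} [NormedAddCommGroup H] [InnerProductSpace ℝ H] [CompleteSpace H]
    (T : H → H) (hfixne : ∃ z, T z = z)
    (hT : ∀ x z, T z = z → ⟪x - T x, z - T x⟫ ≤ 0)
    (ρ : ℝ) (hρ : 0 < ρ)
    (x y : H) (hx : T x ≠ x)
    (hball : Metric.closedBall y ρ ⊆ {z | T z = z}) :
    ‖T x - y + (ρ / ‖T x - x‖) • (T x - x)‖ ^ 2 ≤ ‖x - y‖ ^ 2 - (ρ + ‖T x - x‖) ^ 2 := by
  set d := ‖T x - x‖ with hd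
  have hd0 : 0 < d := norm_pos_iff.mpr (sub_ne_zero.mpr hx)
  have hq : ‖x - T x‖ = d := by rw [hd, norm_sub_rev]
  set c := ρ / d with hc
  have hc0 : 0 < c := div_pos hρ hd0
  have hcd : c * d = ρ := div_mul_cancel₀ ρ hd0.ne'
  -- the fixed point on the boundary of the ball in the direction x - T x
  set z := y + c • (x - T x) with hz
  have hzball : z ∈ Metric.closedBall y ρ := by
    rw [Metric.mem_closedBall, dist_eq_norm]
    have : z - y = c • (x - T x) := by rw [hz]; abel
    rw [this, norm_smul, Real.norm_eq_abs, abs_of_pos hc0, hq, hcd]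
  have hfix : T z = z := hball hzball
  have hcut := hT x z hfix
  have hzexp : z - T x = (y - T x) + c • (x - T x) := by rw [hz]; abel
  rw [hzexp, inner_add_right, real_inner_smul_right,
    real_inner_self_eq_norm_sq, hq] at hcut
  -- key inequality: ⟪T x - y, T x - x⟫ ≤ -(ρ * d)
  have key : ⟪T x - y, T x - x⟫ ≤ -(ρ * d) := by
    have h1 : ⟪T x - y, T x - x⟫ = ⟪x - T x, y - T x⟫ := by
      rw [show T x - y = -(y - T x) by abel, show T x - x = -(x - T x) by abel,
        inner_neg_neg, real_inner_comm]
    nlinarith [hcut]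
  -- expand the two squared norms
  have hu : ‖T x - y + c • (T x - x)‖ ^ 2
      = ‖T x - y‖ ^ 2 + 2 * (c * ⟪T x - y, T x - x⟫) + ρ ^ 2 := by
    rw [norm_add_sq_real, real_inner_smul_right, norm_smul, Real.norm_eq_abs,
      abs_of_pos hc0, ← hd, mul_pow, ← hcd]
    ring
  have hxy : ‖x - y‖ ^ 2 = ‖T x - y‖ ^ 2 - 2 * ⟪T x - y, T x - x⟫ + d ^ 2 := by
    have : x - y = (T x - y) - (T x - x) := by abel
    rw [this, norm_sub_sq_real, ← hd]
  rw [hu, hxy]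
  nlinarith [mul_le_mul_of_nonneg_left key hc0.le, hcd]
end

section
/- Let H be a real Hilbert space, let I be a countable index set, and for each i ∈ I let T_i : H → H be a cutter with C_i := Fix T_i. Let Q ⊆ H be nonempty, closed and convex, let α ∈ (0,2], let ρ_i : H → (0,∞) for i ∈ I, let J : H → 2^I \ {∅} satisfy sup_{x ∈ H} #(J(x)) < ∞, and let λ_j : H → [0,1] satisfy Σ_{j ∈ J(x)} λ_j(x) = 1 for every x. Define V(x) := x + α Σ_{j ∈ J(x)} λ_j(x) β_j(x)(T_j(x) − x), where β_j(x) := (ρ_j(x) + ‖T_j(x) − x‖)/‖T_j(x) − x‖ if T_j(x) ≠ x and β_j(x) := 0 otherwise. Assume C ∩ Q ≠ ∅ where C := ⋂_{i ∈ I} C_i, and assume there is λ > 0 with λ_j(x) ≥ λ for all x ∈ H and all j ∈ J(x) ∩ I_+(x), where I_+(x) := {i ∈ I : x ∉ C_i}. Then Fix(P_Q ∘ V) = Q ∩ Fix V and Fix V = {x ∈ H : x ∈ ⋂_{j ∈ J(x)} Fix T_j}, where P_Q is the metric projection onto Q. -/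
open scoped RealInnerProductSpace Classical

/-- Lemma 2.2, fixed point part: `Fix (P_Q ∘ V) = Q ∩ Fix V` and
`Fix V = {x : x ∈ ⋂_{j ∈ J(x)} Fix T_j}`. -/
theorem stmt3 {H : Type*} [NormedAddCommGroup H] [InnerProductSpace ℝ H] [CompleteSpace H]
    {I : Type*} [Countable I]
    (T : I → H → H)
    (hfixne : ∀ i, ∃ z, T i z = z)
    (hT : ∀ i, ∀ x z, T i z = z → ⟪x - T i x, z - T i x⟫ ≤ 0)
    (Q : Set H) (hQne : Q.Nonempty) (hQclosed : IsClosed Q) (hQconvex : Convex ℝ Q)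
    (PQ : H → H) (hPQmem : ∀ u, PQ u ∈ Q)
    (hPQmin : ∀ u, ∀ w ∈ Q, ‖PQ u - u‖ ≤ ‖w - u‖)
    (α : ℝ) (hα : 0 < α ∧ α ≤ 2)
    (ρ : I → H → ℝ) (hρ : ∀ i u, 0 < ρ i u)
    (J : H → Finset I) (hJne : ∀ u, (J u).Nonempty)
    (M : ℕ) (hJM : ∀ u, (J u).card ≤ M)
    (lam : I → H → ℝ) (hlam01 : ∀ i u, 0 ≤ lam i u ∧ lam i u ≤ 1)
    (hlamsum : ∀ u, ∑ j ∈ J u, lam j u = 1)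
    (V : H → H)
    (hV : ∀ u, V u = u + α • ∑ j ∈ J u,
      (lam j u * if T j u ≠ u then (ρ j u + ‖T j u - u‖) / ‖T j u - u‖ else 0) •
        (T j u - u))
    (hCQ : ((⋂ i, {z | T i z = z}) ∩ Q).Nonempty)
    (lam0 : ℝ) (hlam0 : 0 < lam0)
    (hlamlb : ∀ u, ∀ j ∈ J u, T j u ≠ u → lam0 ≤ lam j u) :
    {u | PQ (V u) = u} = Q ∩ {u | V u = u} ∧
      {u | V u = u} = {u | ∀ j ∈ J u, T j u = u} := by
  obtain ⟨hα0, hα2⟩ := hα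
  obtain ⟨z, hzC, hzQ⟩ := hCQ
  simp only [Set.mem_iInter, Set.mem_setOf_eq] at hzC
  set c : I → H → ℝ := fun j u =>
    lam j u * if T j u ≠ u then (ρ j u + ‖T j u - u‖) / ‖T j u - u‖ else 0 with hc
  have hc0 : ∀ j u, 0 ≤ c j u := by
    intro j u
    apply mul_nonneg (hlam01 j u).1
    split_ifs with h
    · exact div_nonneg (add_nonneg (hρ j u).le (norm_nonneg _)) (norm_nonneg _)
    · exact le_refl 0
  have hcut : ∀ j (u : H), ‖T j u - u‖ ^ 2 ≤ ⟪T j u - u, z - u⟫ := by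
    intro j u
    have h := hT j u z (hzC j)
    have e : ⟪T j u - u, z - u⟫ = -⟪u - T j u, z - T j u⟫ + ⟪T j u - u, T j u - u⟫ := by
      rw [← inner_neg_left, neg_sub, ← inner_add_right]
      congr 1
      abel
    rw [e, real_inner_self_eq_norm_sq]
    linarith
  have hpos : ∀ (u : H), ∀ j ∈ J u, T j u ≠ u → 0 < c j u := by
    intro u j hj hne
    apply mul_pos (lt_of_lt_of_le hlam0 (hlamlb u j hj hne))
    rw [if_pos hne]
    have hd : (0:ℝ) < ‖T j u - u‖ := by
      rw [norm_pos_iff]; exact sub_ne_zero.mpr hne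
    exact div_pos (add_pos (hρ j u) hd) hd
  have key : ∀ u : H, (∑ j ∈ J u, c j u * ⟪T j u - u, z - u⟫) ≤ 0 →
      ∀ j ∈ J u, T j u = u := by
    intro u hsum j hj
    by_contra hne
    have hterm : ∀ k ∈ J u, 0 ≤ c k u * ⟪T k u - u, z - u⟫ := by
      intro k _
      exact mul_nonneg (hc0 k u) (le_trans (by positivity) (hcut k u))
    have hjpos : 0 < c j u * ⟪T j u - u, z - u⟫ := by
      have hd : (0:ℝ) < ‖T j u - u‖ := by
        rw [norm_pos_iff]; exact sub_ne_zero.mpr hne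
      have : (0:ℝ) < ‖T j u - u‖ ^ 2 := by positivity
      exact mul_pos (hpos u j hj hne) (lt_of_lt_of_le this (hcut j u))
    have h2 : (0:ℝ) < ∑ k ∈ J u, c k u * ⟪T k u - u, z - u⟫ :=
      Finset.sum_pos' hterm ⟨j, hj, hjpos⟩
    linarith
  have hinner : ∀ u : H,
      ⟪∑ j ∈ J u, c j u • (T j u - u), z - u⟫ =
        ∑ j ∈ J u, c j u * ⟪T j u - u, z - u⟫ := by
    intro u
    rw [sum_inner]
    exact Finset.sum_congr rfl fun j _ => real_inner_smul_left _ _ _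
  have fixV : {u | V u = u} = {u | ∀ j ∈ J u, T j u = u} := by
    ext u
    simp only [Set.mem_setOf_eq]
    constructor
    · intro hVu
      have hS : α • ∑ j ∈ J u, c j u • (T j u - u) = 0 := by
        have := hV u
        rw [hVu] at this
        have := this.symm
        rwa [add_eq_left] at this
      have hS0 : ∑ j ∈ J u, c j u • (T j u - u) = 0 := by
        rcases smul_eq_zero.mp hS with h | h
        · exact absurd h (ne_of_gt hα0)
        · exact h
      apply key u
      rw [← hinner, hS0, inner_zero_left]
    · intro hall
      rw [hV u]
      have : ∑ j ∈ J u, c j u • (T j u - u) = 0 := by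
        apply Finset.sum_eq_zero
        intro j hj
        rw [hall j hj, sub_self, smul_zero]
      rw [this, smul_zero, add_zero]
  constructor
  · ext u
    simp only [Set.mem_setOf_eq, Set.mem_inter_iff]
    constructor
    · intro hPu
      have huQ : u ∈ Q := hPu ▸ hPQmem (V u)
      have hmin : ∀ w ∈ Q, ‖u - V u‖ ≤ ‖w - V u‖ := by
        intro w hw
        have := hPQmin (V u) w hw
        rwa [hPu] at this
      -- projection characterization
      haveI : Nonempty Q := ⟨⟨u, huQ⟩⟩
      have hiInf : ‖V u - u‖ = ⨅ w : Q, ‖V u - w‖ := by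
        apply le_antisymm
        · apply le_ciInf
          intro w
          rw [norm_sub_rev, norm_sub_rev (V u) (w : H)]
          exact hmin w w.2
        · exact ciInf_le ⟨0, fun x ⟨w, hw⟩ => hw ▸ norm_nonneg _⟩ (⟨u, huQ⟩ : Q)
      have hchar := (norm_eq_iInf_iff_real_inner_le_zero hQconvex huQ).mp hiInf
      have hz := hchar z hzQ
      -- ⟪V u - u, z - u⟫ ≤ 0
      have hVsub : V u - u = α • ∑ j ∈ J u, c j u • (T j u - u) := by
        rw [hV u]; abel
      rw [hVsub, real_inner_smul_left, hinner] at hz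
      have hle : (∑ j ∈ J u, c j u * ⟪T j u - u, z - u⟫) ≤ 0 := by
        by_contra h
        push_neg at h
        nlinarith
      have hall := key u hle
      have hVu : V u = u := (Set.ext_iff.mp fixV u).mpr hall
      refine ⟨huQ, hVu⟩
    · rintro ⟨huQ, hVu⟩
      rw [hVu]
      have := hPQmin u u huQ
      rw [sub_self, norm_zero] at this
      have h0 : PQ u - u = 0 := by
        rw [← norm_le_zero_iff]; exact this
      exact sub_eq_zero.mp h0
  · exact fixV
end

section
/- Let H be a real Hilbert space, let I be a countable index set, and for each i ∈ I let T_i : H → H be a cutter with C_i := Fix T_i and C := ⋂_{i ∈ I} C_i. Let Q ⊆ H be nonempty, closed and convex, let α ∈ (0,2], let ρ_i : H → (0,∞), let J : H → 2^I \ {∅} satisfy sup_{x ∈ H} #(J(x)) < ∞, and let λ_j : H → [0,1] satisfy Σ_{j ∈ J(x)} λ_j(x) = 1 and λ_j(x) ≥ λ > 0 for all j ∈ J_+(x) := J(x) ∩ I_+(x), where I_+(x) := {i ∈ I : x ∉ C_i}. Define V(x) := x + α Σ_{j ∈ J(x)} λ_j(x) β_j(x)(T_j(x) − x), where β_j(x)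 := (ρ_j(x) + ‖T_j(x) − x‖)/‖T_j(x) − x‖ if T_j(x) ≠ x and β_j(x) := 0 otherwise. Assume there exist z ∈ Q and R > 0 with B(z, 2R) ⊆ C. Then for every x ∉ C satisfying ρ(x) := max_{j ∈ J_+(x)} ρ_j(x) ≤ R, one has ‖P_Q(V(x)) − z‖² ≤ ‖x − z‖² − 2αλR ρ(x). -/
open scoped RealInnerProductSpace Classical

private lemma proj_sq_le {H : Type*} [NormedAddCommGroup H] [InnerProductSpace ℝ H]
    (Q : Set H) (hQconvex : Convex ℝ Q)
    (PQ : H → H) (hPQmem : ∀ u, PQ u ∈ Q)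
    (hPQmin : ∀ u, ∀ w ∈ Q, ‖PQ u - u‖ ≤ ‖w - u‖)
    (z : H) (hzQ : z ∈ Q) (u : H) : ‖PQ u - z‖ ^ 2 ≤ ‖u - z‖ ^ 2 := by
  have hne : Nonempty Q := ⟨⟨z, hzQ⟩⟩
  have hinf : ‖u - PQ u‖ = ⨅ w : Q, ‖u - w‖ := by
    apply le_antisymm
    · apply le_ciInf
      intro w
      rw [norm_sub_rev]
      simpa [norm_sub_rev] using hPQmin u w w.2
    · exact ciInf_le ⟨0, Set.forall_mem_range.2 fun w => norm_nonneg _⟩ (⟨PQ u, hPQmem u⟩ : Q)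
  have hvi : ⟪u - PQ u, z - PQ u⟫ ≤ 0 :=
    (norm_eq_iInf_iff_real_inner_le_zero hQconvex (hPQmem u)).mp hinf z hzQ
  have hexp : ‖u - z‖ ^ 2 = ‖u - PQ u‖ ^ 2 + 2 * ⟪u - PQ u, PQ u - z⟫ + ‖PQ u - z‖ ^ 2 := by
    have h := norm_add_sq_real (u - PQ u) (PQ u - z)
    rw [sub_add_sub_cancel] at h
    linarith
  have h2 : ⟪u - PQ u, PQ u - z⟫ = -⟪u - PQ u, z - PQ u⟫ := by
    rw [← neg_sub z (PQ u), inner_neg_right]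
  nlinarith [sq_nonneg ‖u - PQ u‖]

private lemma jensen_sq {H : Type*} [NormedAddCommGroup H] [InnerProductSpace ℝ H] {I : Type*}
    (s : Finset I) (w : I → ℝ) (d : I → H) (hw : ∀ j ∈ s, 0 ≤ w j)
    (hsum : ∑ j ∈ s, w j = 1) :
    ‖∑ j ∈ s, w j • d j‖ ^ 2 ≤ ∑ j ∈ s, w j * ‖d j‖ ^ 2 := by
  have h1 : ‖∑ j ∈ s, w j • d j‖ ≤ ∑ j ∈ s, w j * ‖d j‖ := by
    refine (norm_sum_le _ _).trans_eq (Finset.sum_congr rfl fun j hj => ?_)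
    rw [norm_smul, Real.norm_of_nonneg (hw j hj)]
  have h2 : (∑ j ∈ s, w j * ‖d j‖) ^ 2 ≤ ∑ j ∈ s, w j * ‖d j‖ ^ 2 := by
    have hcs := Finset.sum_mul_sq_le_sq_mul_sq s (fun j => Real.sqrt (w j))
      (fun j => Real.sqrt (w j) * ‖d j‖)
    have e1 : ∀ j ∈ s, Real.sqrt (w j) * (Real.sqrt (w j) * ‖d j‖) = w j * ‖d j‖ := fun j hj => by
      rw [← mul_assoc, Real.mul_self_sqrt (hw j hj)]
    have e2 : ∀ j ∈ s, Real.sqrt (w j) ^ 2 = w j := fun j hj => Real.sq_sqrt (hw j hj)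
    have e3 : ∀ j ∈ s, (Real.sqrt (w j) * ‖d j‖) ^ 2 = w j * ‖d j‖ ^ 2 := fun j hj => by
      rw [mul_pow, Real.sq_sqrt (hw j hj)]
    rw [Finset.sum_congr rfl e1, Finset.sum_congr rfl e2, Finset.sum_congr rfl e3, hsum,
      one_mul] at hcs
    exact hcs
  calc ‖∑ j ∈ s, w j • d j‖ ^ 2 ≤ (∑ j ∈ s, w j * ‖d j‖) ^ 2 :=
        pow_le_pow_left₀ (norm_nonneg _) h1 2
    _ ≤ _ := h2

private lemma cutter_key {H : Type*} [NormedAddCommGroup H] [InnerProductSpace ℝ H]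
    (Tx x z : H) (hne : Tx ≠ x) (R r : ℝ) (hR : 0 < R) (hr : 0 < r) (hrR : r ≤ R)
    (hcut : ∀ w ∈ Metric.closedBall z (2 * R), ⟪x - Tx, w - Tx⟫ ≤ 0) :
    ‖((r + ‖Tx - x‖) / ‖Tx - x‖) • (Tx - x)‖ ^ 2 + R * r ≤
      ⟪z - x, ((r + ‖Tx - x‖) / ‖Tx - x‖) • (Tx - x)⟫ := by
  set t := ‖Tx - x‖ with ht
  have htpos : 0 < t := norm_pos_iff.mpr (sub_ne_zero.mpr hne)
  set w := z + (2 * R / t) • (x - Tx) with hw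
  have hwball : w ∈ Metric.closedBall z (2 * R) := by
    rw [Metric.mem_closedBall, dist_eq_norm, hw, add_sub_cancel_left, norm_smul,
      Real.norm_of_nonneg (by positivity), norm_sub_rev, ← ht]
    rw [div_mul_cancel₀ _ htpos.ne']
  have h1 : ⟪x - Tx, z - Tx⟫ + (2 * R / t) * t ^ 2 ≤ 0 := by
    have := hcut w hwball
    rw [hw] at this
    have hrw : z + (2 * R / t) • (x - Tx) - Tx = (z - Tx) + (2 * R / t) • (x - Tx) := by abel
    rw [hrw, inner_add_right, real_inner_smul_right, real_inner_self_eq_norm_sq,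
      norm_sub_rev, ← ht] at this
    exact this
  have h2 : (2 * R / t) * t ^ 2 = 2 * R * t := by field_simp
  have h3 : ⟪z - x, Tx - x⟫ = -⟪x - Tx, z - Tx⟫ + t ^ 2 := by
    have e : z - x = (z - Tx) + (Tx - x) := by abel
    rw [e, inner_add_left, real_inner_self_eq_norm_sq, ← ht]
    rw [show ⟪z - Tx, Tx - x⟫ = -⟪x - Tx, z - Tx⟫ by
      rw [← inner_neg_left, neg_sub, real_inner_comm]]
  have h4 : ⟪z - x, Tx - x⟫ ≥ 2 * R * t + t ^ 2 := by
    rw [h3]; nlinarith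
  rw [norm_smul, real_inner_smul_right, Real.norm_of_nonneg (by positivity), ← ht]
  have hb : (r + t) / t * t = r + t := div_mul_cancel₀ _ htpos.ne'
  have hbpos : 0 < (r + t) / t := by positivity
  have h5 : (r + t) / t * ⟪z - x, Tx - x⟫ ≥ (r + t) / t * (2 * R * t + t ^ 2) :=
    mul_le_mul_of_nonneg_left h4 hbpos.le
  have h6 : (r + t) / t * (2 * R * t + t ^ 2) = (r + t) * (2 * R + t) := by
    field_simp
  rw [mul_pow, ← mul_pow, hb]
  nlinarith

/-- Lemma 2.2, descent part: if `B(z, 2R) ⊆ C` with `z ∈ Q`, then for every `x ∉ C`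
with `ρ(x) := max_{j ∈ J_+(x)} ρ_j(x) ≤ R` one has
`‖P_Q(V(x)) − z‖² ≤ ‖x − z‖² − 2αλRρ(x)`. -/
theorem stmt4 {H : Type*} [NormedAddCommGroup H] [InnerProductSpace ℝ H] [CompleteSpace H]
    {I : Type*} [Countable I]
    (T : I → H → H)
    (hfixne : ∀ i, ∃ z, T i z = z)
    (hT : ∀ i, ∀ x z, T i z = z → ⟪x - T i x, z - T i x⟫ ≤ 0)
    (Q : Set H) (hQne : Q.Nonempty) (hQclosed : IsClosed Q) (hQconvex : Convex ℝ Q)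
    (PQ : H → H) (hPQmem : ∀ u, PQ u ∈ Q)
    (hPQmin : ∀ u, ∀ w ∈ Q, ‖PQ u - u‖ ≤ ‖w - u‖)
    (α : ℝ) (hα : 0 < α ∧ α ≤ 2)
    (ρ : I → H → ℝ) (hρ : ∀ i u, 0 < ρ i u)
    (J : H → Finset I) (hJne : ∀ u, (J u).Nonempty)
    (M : ℕ) (hJM : ∀ u, (J u).card ≤ M)
    (lam : I → H → ℝ) (hlam01 : ∀ i u, 0 ≤ lam i u ∧ lam i u ≤ 1)
    (hlamsum : ∀ u, ∑ j ∈ J u, lam j u = 1)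
    (lam0 : ℝ) (hlam0 : 0 < lam0)
    (hlamlb : ∀ u, ∀ j ∈ J u, T j u ≠ u → lam0 ≤ lam j u)
    (V : H → H)
    (hV : ∀ u, V u = u + α • ∑ j ∈ J u,
      (lam j u * if T j u ≠ u then (ρ j u + ‖T j u - u‖) / ‖T j u - u‖ else 0) •
        (T j u - u))
    (z : H) (hzQ : z ∈ Q) (R : ℝ) (hR : 0 < R)
    (hball : Metric.closedBall z (2 * R) ⊆ ⋂ i, {w | T i w = w})
    (x : H) (hx : x ∉ ⋂ i, {w | T i w = w})
    (ρx : ℝ) (hρx : ρx = sSup ((fun j => ρ j x) '' {j | j ∈ J x ∧ T j x ≠ x}))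
    (hρxR : ρx ≤ R) :
    ‖PQ (V x) - z‖ ^ 2 ≤ ‖x - z‖ ^ 2 - 2 * α * lam0 * R * ρx := by
  obtain ⟨hα0, hα2⟩ := hα
  have hproj : ∀ u : H, ‖PQ u - z‖ ^ 2 ≤ ‖u - z‖ ^ 2 :=
    proj_sq_le Q hQconvex PQ hPQmem hPQmin z hzQ
  set d : I → H := fun j =>
    (if T j x ≠ x then (ρ j x + ‖T j x - x‖) / ‖T j x - x‖ else 0) • (T j x - x) with hd
  have hVx : V x = x + α • ∑ j ∈ J x, lam j x • d j := by
    rw [hV x]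
    simp only [hd, mul_smul]
  have hdzero : ∀ j, T j x = x → d j = 0 := fun j h => by simp [hd, h]
  -- the set of active indices
  set S : Set ℝ := (fun j => ρ j x) '' {j | j ∈ J x ∧ T j x ≠ x} with hS
  have hSfin : S.Finite :=
    Set.Finite.image _ ((J x).finite_toSet.subset fun j hj => hj.1)
  by_cases hF : ∀ j ∈ J x, T j x = x
  · have hSe : {j | j ∈ J x ∧ T j x ≠ x} = ∅ :=
      Set.eq_empty_iff_forall_notMem.mpr fun j hj => hj.2 (hF j hj.1)
    have hρx0 : ρx = 0 := by rw [hρx, hS, hSe, Set.image_empty, Real.sSup_empty]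
    have hVx0 : V x = x := by
      rw [hVx]
      have hz : ∀ j ∈ J x, lam j x • d j = 0 := fun j hj => by
        rw [hdzero j (hF j hj), smul_zero]
      rw [Finset.sum_congr rfl hz]
      simp
    rw [hVx0, hρx0]
    simpa using hproj x
  · push_neg at hF
    obtain ⟨j1, hj1J, hj1⟩ := hF
    have hSne : S.Nonempty := ⟨ρ j1 x, j1, ⟨hj1J, hj1⟩, rfl⟩
    have hmax : ρx ∈ S := by rw [hρx]; exact hSne.csSup_mem hSfin
    obtain ⟨jm, ⟨hjmJ, hjmne⟩, hjm⟩ := hmax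
    have hρxpos : 0 < ρx := hjm ▸ hρ jm x
    have hρle : ∀ j ∈ J x, T j x ≠ x → ρ j x ≤ ρx := fun j hj hne => by
      rw [hρx]
      exact le_csSup hSfin.bddAbove ⟨j, ⟨hj, hne⟩, rfl⟩
    -- key inequality for active indices
    have key : ∀ j ∈ J x, T j x ≠ x → ‖d j‖ ^ 2 + R * ρ j x ≤ ⟪z - x, d j⟫ := by
      intro j hj hne
      have hcut : ∀ w ∈ Metric.closedBall z (2 * R), ⟪x - T j x, w - T j x⟫ ≤ 0 := fun w hw =>
        hT j x w (Set.mem_iInter.mp (hball hw) j)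
      have hdj : d j = ((ρ j x + ‖T j x - x‖) / ‖T j x - x‖) • (T j x - x) := by
        rw [hd]; simp only [if_pos hne]
      rw [hdj]
      exact cutter_key (T j x) x z hne R (ρ j x)
        hR (hρ j x) ((hρle j hj hne).trans hρxR) hcut
    set s : H := ∑ j ∈ J x, lam j x • d j with hs
    have hjensen : ‖s‖ ^ 2 ≤ ∑ j ∈ J x, lam j x * ‖d j‖ ^ 2 :=
      jensen_sq (J x) (fun j => lam j x) d (fun j _ => (hlam01 j x).1) (hlamsum x)
    have hinner : ⟪z - x, s⟫ = ∑ j ∈ J x, lam j x * ⟪z - x, d j⟫ := by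
      rw [hs, inner_sum]
      exact Finset.sum_congr rfl fun j _ => real_inner_smul_right _ _ _
    have hterm : ∀ j ∈ J x, 0 ≤ lam j x * (2 * ⟪z - x, d j⟫ - α * ‖d j‖ ^ 2) := by
      intro j hj
      apply mul_nonneg (hlam01 j x).1
      by_cases h : T j x = x
      · simp [hdzero j h]
      · have hk := key j hj h
        nlinarith [hρ j x, sq_nonneg ‖d j‖]
    have hjm_term : lam0 * (2 * R * ρx) ≤ lam jm x * (2 * ⟪z - x, d jm⟫ - α * ‖d jm‖ ^ 2) := by
      have hk := key jm hjmJ hjmne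
      have hlam := hlamlb x jm hjmJ hjmne
      have hB : 2 * R * ρx ≤ 2 * ⟪z - x, d jm⟫ - α * ‖d jm‖ ^ 2 := by
        nlinarith [sq_nonneg ‖d jm‖]
      exact mul_le_mul hlam hB (by positivity) (hlam0.le.trans hlam)
    have hsum_ge : lam0 * (2 * R * ρx) ≤
        ∑ j ∈ J x, lam j x * (2 * ⟪z - x, d j⟫ - α * ‖d j‖ ^ 2) :=
      hjm_term.trans (Finset.single_le_sum hterm hjmJ)
    have hsum_split : ∑ j ∈ J x, lam j x * (2 * ⟪z - x, d j⟫ - α * ‖d j‖ ^ 2)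
        = 2 * ⟪z - x, s⟫ - α * ∑ j ∈ J x, lam j x * ‖d j‖ ^ 2 := by
      rw [hinner, Finset.mul_sum, Finset.mul_sum, ← Finset.sum_sub_distrib]
      exact Finset.sum_congr rfl fun j _ => by ring
    have hVz : V x - z = (x - z) + α • s := by rw [hVx]; abel
    have hexp := norm_add_sq_real (x - z) (α • s)
    rw [← hVz] at hexp
    have hi : ⟪x - z, α • s⟫ = -(α * ⟪z - x, s⟫) := by
      rw [real_inner_smul_right, show x - z = -(z - x) by abel, inner_neg_left]
      ring
    have hns : ‖α • s‖ ^ 2 = α ^ 2 * ‖s‖ ^ 2 := by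
      rw [norm_smul, Real.norm_of_nonneg hα0.le, mul_pow]
    have final : ‖V x - z‖ ^ 2 ≤ ‖x - z‖ ^ 2 - 2 * α * lam0 * R * ρx := by
      rw [hsum_split] at hsum_ge
      have h6 : α ^ 2 * ‖s‖ ^ 2 ≤ α ^ 2 * ∑ j ∈ J x, lam j x * ‖d j‖ ^ 2 :=
        mul_le_mul_of_nonneg_left hjensen (sq_nonneg α)
      have h7 : α * (lam0 * (2 * R * ρx)) ≤
          α * (2 * ⟪z - x, s⟫ - α * ∑ j ∈ J x, lam j x * ‖d j‖ ^ 2) :=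
        mul_le_mul_of_nonneg_left hsum_ge hα0.le
      rw [hi, hns] at hexp
      nlinarith [h6, h7, hexp]
    calc ‖PQ (V x) - z‖ ^ 2 ≤ ‖V x - z‖ ^ 2 := hproj (V x)
      _ ≤ _ := final
end

section
/- Let H be a real Hilbert space, let T : H → H be a cutter, let α ∈ (0,2], let ρ > 0 and R ≥ ρ, and let z ∈ H with B(z, 2R) ⊆ Fix T. Let x ∉ Fix T and define U(x) := x + α β(x)(T(x) − x), where β(x) := (ρ + ‖T(x) − x‖)/‖T(x) − x‖. Then ‖U(x) − z‖² ≤ ‖x − z‖² − 2αRρ. -/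
open scoped RealInnerProductSpace

/-- Single-operator descent estimate: if `B(z, 2R) ⊆ Fix T`, `0 < ρ ≤ R` and `x ∉ Fix T`,
then the overrelaxed step `U(x)` satisfies `‖U(x) − z‖² ≤ ‖x − z‖² − 2αRρ`. -/
theorem stmt5 {H : Type*} [NormedAddCommGroup H] [InnerProductSpace ℝ H] [CompleteSpace H]
    (T : H → H)
    (hT : ∀ x z, T z = z → ⟪x - T x, z - T x⟫ ≤ 0)
    (α : ℝ) (hα : 0 < α ∧ α ≤ 2)
    (ρ R : ℝ) (hρ : 0 < ρ) (hρR : ρ ≤ R)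
    (z : H) (hball : Metric.closedBall z (2 * R) ⊆ {w | T w = w})
    (x : H) (hx : T x ≠ x) :
    ‖x + (α * ((ρ + ‖T x - x‖) / ‖T x - x‖)) • (T x - x) - z‖ ^ 2 ≤
      ‖x - z‖ ^ 2 - 2 * α * R * ρ := by
  obtain ⟨hα0, hα2⟩ := hα
  set v : H := T x - x with hv
  have hvne : v ≠ 0 := sub_ne_zero.mpr hx
  set d : ℝ := ‖v‖ with hd
  have hd0 : 0 < d := norm_pos_iff.mpr hvne
  set w : H := z - (2 * R / d) • v with hw
  have hwmem : w ∈ Metric.closedBall z (2 * R) := by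
    rw [Metric.mem_closedBall, dist_eq_norm, hw]
    have : z - (2 * R / d) • v - z = -((2 * R / d) • v) := by abel
    rw [this, norm_neg, norm_smul, Real.norm_eq_abs, ← hd,
      abs_of_nonneg (by have hR : 0 < R := hρ.trans_le hρR; positivity), div_mul_cancel₀ _ hd0.ne']
  have hwfix : T w = w := hball hwmem
  have h0 : ⟪x - T x, w - T x⟫ ≤ 0 := hT x w hwfix
  have hxT : x - T x = -v := by simp [hv]
  have hwT : w - T x = (z - x) - v - (2 * R / d) • v := by
    rw [hw, hv]; abel
  rw [hxT, hwT] at h0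
  have hvv : ⟪v, v⟫ = d ^ 2 := by
    rw [real_inner_self_eq_norm_sq, hd]
  have h0' : -⟪v, z - x⟫ + d ^ 2 + (2 * R / d) * d ^ 2 ≤ 0 := by
    have := h0
    rw [inner_neg_left, inner_sub_right, inner_sub_right, inner_smul_right, hvv] at this
    linarith
  have hinner : ⟪x - z, v⟫ ≤ -(d ^ 2 + 2 * R * d) := by
    have h1 : (2 * R / d) * d ^ 2 = 2 * R * d := by
      field_simp
    have h2 : ⟪x - z, v⟫ = -⟪v, z - x⟫ := by
      rw [real_inner_comm, show x - z = -(z - x) by abel, inner_neg_right]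
    rw [h2]; linarith
  set c : ℝ := α * ((ρ + d) / d) with hc
  have hcd : c * d = α * (ρ + d) := by
    rw [hc]; field_simp
  have hc0 : 0 < c := by
    apply mul_pos hα0; positivity
  have hexp : ‖x + c • v - z‖ ^ 2 = ‖x - z‖ ^ 2 + 2 * c * ⟪x - z, v⟫ + c ^ 2 * d ^ 2 := by
    have : x + c • v - z = (x - z) + c • v := by abel
    rw [this, norm_add_sq_real, inner_smul_right, norm_smul, Real.norm_eq_abs,
      abs_of_pos hc0, mul_pow, ← hd]
    ring
  rw [hexp]
  have hib : 2 * c * ⟪x - z, v⟫ ≤ 2 * c * (-(d ^ 2 + 2 * R * d)) := by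
    apply mul_le_mul_of_nonneg_left hinner (by positivity)
  have key : 2 * α * R * ρ ≤ 2 * c * (d ^ 2 + 2 * R * d) - c ^ 2 * d ^ 2 := by
    have h3 : c ^ 2 * d ^ 2 = (α * (ρ + d)) ^ 2 := by rw [← hcd]; ring
    have h4 : 2 * c * (d ^ 2 + 2 * R * d) = 2 * (α * (ρ + d)) * (d + 2 * R) := by
      rw [← hcd]; ring
    rw [h3, h4]
    nlinarith [mul_le_mul_of_nonneg_right hα2 (mul_nonneg hα0.le (sq_nonneg (ρ + d))),
      mul_nonneg hα0.le (mul_nonneg (sub_nonneg.mpr hρR) hρ.le),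
      mul_nonneg hα0.le (mul_nonneg (by linarith : (0:ℝ) ≤ 2 * R - ρ) hd0.le)]
  linarith
end

section
/- (Slater condition) Let H be a real Hilbert space, let I be an index set, and for each i ∈ I let f_i : H → ℝ be convex and lower semicontinuous. Assume f(z) := sup_{i ∈ I} f_i(z) < 0 for some z ∈ H. Then for every r > 0 and every x in the closed ball B(z, r), every i ∈ I with f_i(x) > 0, and every subgradient g_i(x) ∈ ∂f_i(x), one has ‖g_i(x)‖ ≥ −f(z)/r > 0. -/
open scoped RealInnerProductSpace

/-- Slater condition: if `sup_i f_i(z) < 0`, then for every `r > 0`, every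
`x ∈ B(z, r)`, every `i` with `f_i(x) > 0` and every subgradient `g ∈ ∂f_i(x)`,
one has `‖g‖ ≥ −f(z)/r > 0`. -/
theorem stmt6 {H : Type*} [NormedAddCommGroup H] [InnerProductSpace ℝ H] [CompleteSpace H]
    {I : Type*} (f : I → H → ℝ)
    (hconv : ∀ i, ConvexOn ℝ Set.univ (f i))
    (hlsc : ∀ i, LowerSemicontinuous (f i))
    (z : H) (hz : (⨆ i, f i z) < 0)
    (r : ℝ) (hr : 0 < r)
    (x : H) (hx : x ∈ Metric.closedBall z r)
    (i : I) (hfi : 0 < f i x)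
    (g : H) (hg : ∀ y, f i x + ⟪g, y - x⟫ ≤ f i y) :
    0 < -(⨆ j, f j z) / r ∧ -(⨆ j, f j z) / r ≤ ‖g‖ := by
  set S : ℝ := ⨆ j, f j z with hS
  have hbdd : BddAbove (Set.range fun j => f j z) := by
    by_contra h
    rw [hS, Real.iSup_of_not_bddAbove h] at hz
    exact lt_irrefl 0 hz
  have hle : f i z ≤ S := le_ciSup hbdd i
  have hdist : ‖z - x‖ ≤ r := by
    rw [Metric.mem_closedBall] at hx
    rwa [show z - x = -(x - z) by abel, norm_neg, ← dist_eq_norm]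
  have hin : -(‖g‖ * r) ≤ ⟪g, z - x⟫ := by
    have h1 := abs_real_inner_le_norm g (z - x)
    have h2 : ‖g‖ * ‖z - x‖ ≤ ‖g‖ * r := by
      exact mul_le_mul_of_nonneg_left hdist (norm_nonneg g)
    have := neg_abs_le ⟪g, z - x⟫
    nlinarith
  have hkey := hg z
  have h3 : -S ≤ ‖g‖ * r := by nlinarith
  constructor
  · apply div_pos (by linarith) hr
  · rw [div_le_iff₀ hr]
    linarith [mul_comm ‖g‖ r]
end

section
/- Let H be a real Hilbert space, let I be a countable index set, and for each i ∈ I let T_i : H → H be a cutter with C_i := Fix T_i and C := ⋂_{i ∈ I} C_i. Let Q ⊆ H be nonempty, closed and convex with metric projection P_Q. Let {I_k}_{k=0}^∞ be a control sequence in I (set-valued mappings I_k : H → 2^I \ {∅} with sup_{x,k} #(I_k(x)) < ∞), let λ_{i,k} : H → [0,1] satisfy Σ_{i ∈ I_k(x)} λ_{i,k}(x) = 1, let {α_k} ⊂ (0,2], {r_k} ⊂ (0,∞), and let φ_i : H → (0,∞). Define x_0 ∈ Q and x_{k+1} := P_Q( x_k + α_{[k]} Σ_{i ∈ I_k(x_k)}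 λ_{i,k}(x_k) β_{i,k}(x_k)(T_i(x_k) − x_k) ), where [0] := 0, [k] := #{0 ≤ n ≤ k−1 : x_n ≠ x_{n+1}}, and β_{i,k}(x) := (r_{[k]}/φ_i(x) + ‖T_i(x) − x‖)/‖T_i(x) − x‖ if T_i(x) ≠ x and 0 otherwise. Assume: (i) int(C) ∩ Q ≠ ∅; (ii) r_k → 0 and Σ_{k=0}^∞ α_k r_k = ∞; (iii) for each bounded S ⊆ H there are 0 < δ ≤ Δ < ∞ with δ ≤ φ_i(x) ≤ Δ for all x ∈ S and i ∈ I; (iv) there is λ > 0 with λ_{i,k}(x) ≥ λ for all x, k and i ∈ I_k(x) ∩ I_+(x); (v) {I_k} is well matched with C. If the sequence {x_k} is bounded, then x_k ∈ C ∩ Q for some k. -/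
open scoped RealInnerProductSpace Classical


/-- Per-step inner product estimate for the overrelaxed cutter step. -/
lemma core_inner {H : Type*} [NormedAddCommGroup H] [InnerProductSpace ℝ H] {ι : Type*}
    (s : Finset ι) (v : ι → H) (w : H) (lm γ : ι → ℝ) (ρ' : ℝ)
    (hlm : ∀ i ∈ s, 0 ≤ lm i)
    (hγpos : ∀ i ∈ s, v i ≠ 0 → 0 < γ i)
    (hinner : ∀ i ∈ s, v i ≠ 0 → ⟪v i, w⟫ ≤ -(‖v i‖ ^ 2 + ρ' * ‖v i‖)) :
    ⟪∑ i ∈ s, (lm i * if v i ≠ 0 then γ i / ‖v i‖ else 0) • v i, w⟫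
      ≤ -∑ i ∈ s.filter (fun i => v i ≠ 0), lm i * γ i * (‖v i‖ + ρ') := by
  have hd : ∑ i ∈ s, (lm i * if v i ≠ 0 then γ i / ‖v i‖ else 0) • v i
      = ∑ i ∈ s.filter (fun i => v i ≠ 0), (lm i * (γ i / ‖v i‖)) • v i := by
    rw [Finset.sum_filter]
    refine Finset.sum_congr rfl fun i _ => ?_
    by_cases h : v i ≠ 0 <;> simp [h]
  rw [hd, sum_inner, ← Finset.sum_neg_distrib]
  refine Finset.sum_le_sum fun i hi => ?_
  obtain ⟨his, hvi⟩ := Finset.mem_filter.mp hi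
  have hn : (0:ℝ) < ‖v i‖ := norm_pos_iff.mpr hvi
  have hγ := hγpos i his hvi
  have hc : (0:ℝ) ≤ lm i * (γ i / ‖v i‖) :=
    mul_nonneg (hlm i his) (by positivity)
  rw [real_inner_smul_left]
  calc lm i * (γ i / ‖v i‖) * ⟪v i, w⟫
      ≤ lm i * (γ i / ‖v i‖) * (-(‖v i‖ ^ 2 + ρ' * ‖v i‖)) :=
        mul_le_mul_of_nonneg_left (hinner i his hvi) hc
    _ = -(lm i * γ i * (‖v i‖ + ρ')) := by field_simp

/-- Per-step norm estimate. -/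
lemma core_norm {H : Type*} [NormedAddCommGroup H] [InnerProductSpace ℝ H] {ι : Type*}
    (s : Finset ι) (v : ι → H) (lm γ : ι → ℝ)
    (hlm : ∀ i ∈ s, 0 ≤ lm i) (hlmsum : ∑ i ∈ s, lm i ≤ 1)
    (hγpos : ∀ i ∈ s, v i ≠ 0 → 0 < γ i) :
    ‖∑ i ∈ s, (lm i * if v i ≠ 0 then γ i / ‖v i‖ else 0) • v i‖ ^ 2
      ≤ ∑ i ∈ s.filter (fun i => v i ≠ 0), lm i * γ i ^ 2 := by
  set F := s.filter (fun i => v i ≠ 0) with hF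
  have hd : ∑ i ∈ s, (lm i * if v i ≠ 0 then γ i / ‖v i‖ else 0) • v i
      = ∑ i ∈ F, (lm i * (γ i / ‖v i‖)) • v i := by
    rw [hF, Finset.sum_filter]
    refine Finset.sum_congr rfl fun i _ => ?_
    by_cases h : v i ≠ 0 <;> simp [h]
  have hnorm : ‖∑ i ∈ F, (lm i * (γ i / ‖v i‖)) • v i‖ ≤ ∑ i ∈ F, lm i * γ i := by
    refine (norm_sum_le _ _).trans (Finset.sum_le_sum fun i hi => ?_)
    obtain ⟨his, hvi⟩ := Finset.mem_filter.mp hi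
    have hn : (0:ℝ) < ‖v i‖ := norm_pos_iff.mpr hvi
    have hγ := hγpos i his hvi
    rw [norm_smul, Real.norm_eq_abs,
      abs_of_nonneg (mul_nonneg (hlm i his) (by positivity))]
    rw [mul_assoc, div_mul_cancel₀ _ hn.ne']
  have hsumnn : ∀ i ∈ F, 0 ≤ lm i * γ i := fun i hi => by
    obtain ⟨his, hvi⟩ := Finset.mem_filter.mp hi
    exact mul_nonneg (hlm i his) (hγpos i his hvi).le
  have hCS : (∑ i ∈ F, lm i * γ i) ^ 2 ≤ (∑ i ∈ F, lm i) * ∑ i ∈ F, lm i * γ i ^ 2 := by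
    have h1 : ∀ i ∈ F, lm i * γ i = Real.sqrt (lm i) * (Real.sqrt (lm i) * γ i) := by
      intro i hi
      obtain ⟨his, _⟩ := Finset.mem_filter.mp hi
      rw [← mul_assoc, Real.mul_self_sqrt (hlm i his)]
    have h2 : ∀ i ∈ F, Real.sqrt (lm i) ^ 2 = lm i := by
      intro i hi
      obtain ⟨his, _⟩ := Finset.mem_filter.mp hi
      exact Real.sq_sqrt (hlm i his)
    have h3 : ∀ i ∈ F, (Real.sqrt (lm i) * γ i) ^ 2 = lm i * γ i ^ 2 := by
      intro i hi
      obtain ⟨his, _⟩ := Finset.mem_filter.mp hi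
      rw [mul_pow, Real.sq_sqrt (hlm i his)]
    calc (∑ i ∈ F, lm i * γ i) ^ 2
        = (∑ i ∈ F, Real.sqrt (lm i) * (Real.sqrt (lm i) * γ i)) ^ 2 := by
          rw [Finset.sum_congr rfl h1]
      _ ≤ (∑ i ∈ F, Real.sqrt (lm i) ^ 2) * ∑ i ∈ F, (Real.sqrt (lm i) * γ i) ^ 2 :=
          Finset.sum_mul_sq_le_sq_mul_sq _ _ _
      _ = (∑ i ∈ F, lm i) * ∑ i ∈ F, lm i * γ i ^ 2 := by
          rw [Finset.sum_congr rfl h2, Finset.sum_congr rfl h3]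
  have hFsub : (∑ i ∈ F, lm i) ≤ 1 := by
    refine le_trans (Finset.sum_le_sum_of_subset_of_nonneg (Finset.filter_subset _ _)
      (fun i hi _ => hlm i hi)) hlmsum
  have hrhs : (0:ℝ) ≤ ∑ i ∈ F, lm i * γ i ^ 2 :=
    Finset.sum_nonneg fun i hi => by
      obtain ⟨his, _⟩ := Finset.mem_filter.mp hi
      exact mul_nonneg (hlm i his) (sq_nonneg _)
  calc ‖∑ i ∈ s, (lm i * if v i ≠ 0 then γ i / ‖v i‖ else 0) • v i‖ ^ 2
      ≤ (∑ i ∈ F, lm i * γ i) ^ 2 := by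
        rw [hd]; exact pow_le_pow_left₀ (norm_nonneg _) hnorm 2
    _ ≤ (∑ i ∈ F, lm i) * ∑ i ∈ F, lm i * γ i ^ 2 := hCS
    _ ≤ 1 * ∑ i ∈ F, lm i * γ i ^ 2 := mul_le_mul_of_nonneg_right hFsub hrhs
    _ = _ := one_mul _

/-- Combined per-step decrease estimate. -/
lemma core_combined {H : Type*} [NormedAddCommGroup H] [InnerProductSpace ℝ H] {ι : Type*}
    (s : Finset ι) (v : ι → H) (w : H) (lm γ : ι → ℝ) (ρ' a : ℝ)
    (hρ' : 0 < ρ') (ha : 0 < a)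
    (hlm : ∀ i ∈ s, 0 ≤ lm i) (hlmsum : ∑ i ∈ s, lm i ≤ 1)
    (hγpos : ∀ i ∈ s, v i ≠ 0 → 0 < γ i)
    (hinner : ∀ i ∈ s, v i ≠ 0 → ⟪v i, w⟫ ≤ -(‖v i‖ ^ 2 + ρ' * ‖v i‖))
    (haγ : ∀ i ∈ s, v i ≠ 0 → a * γ i ≤ 2 * ‖v i‖ + ρ') :
    2 * a * ⟪∑ i ∈ s, (lm i * if v i ≠ 0 then γ i / ‖v i‖ else 0) • v i, w⟫
        + a ^ 2 * ‖∑ i ∈ s, (lm i * if v i ≠ 0 then γ i / ‖v i‖ else 0) • v i‖ ^ 2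
      ≤ -(a * ρ') * ∑ i ∈ s.filter (fun i => v i ≠ 0), lm i * γ i := by
  set F := s.filter (fun i => v i ≠ 0) with hF
  have hA := core_inner s v w lm γ ρ' hlm hγpos hinner
  have hB := core_norm s v lm γ hlm hlmsum hγpos
  have key : a ^ 2 * ∑ i ∈ F, lm i * γ i ^ 2 + (a * ρ') * ∑ i ∈ F, lm i * γ i
      ≤ 2 * a * ∑ i ∈ F, lm i * γ i * (‖v i‖ + ρ') := by
    rw [Finset.mul_sum, Finset.mul_sum, Finset.mul_sum, ← Finset.sum_add_distrib]
    refine Finset.sum_le_sum fun i hi => ?_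
    obtain ⟨his, hvi⟩ := Finset.mem_filter.mp hi
    have hγ := hγpos i his hvi
    have hl := hlm i his
    have h2 := haγ i his hvi
    have hn : (0:ℝ) ≤ ‖v i‖ := norm_nonneg _
    nlinarith [mul_nonneg (mul_nonneg (mul_nonneg ha.le hl) hγ.le)
      (sub_nonneg.mpr h2)]
  have h2a : (0:ℝ) ≤ 2 * a := by linarith
  have ha2 : (0:ℝ) ≤ a ^ 2 := sq_nonneg a
  nlinarith [mul_le_mul_of_nonneg_left hA h2a, mul_le_mul_of_nonneg_left hB ha2]

set_option maxHeartbeats 2000000 in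
/-- Theorem 4.7 (main deterministic result): under conditions (i)–(v), if the sequence
generated by the overrelaxed method with the correction-step counter `[k]` is bounded,
then it reaches `C ∩ Q` in finitely many steps. -/
theorem stmt11 {H : Type*} [NormedAddCommGroup H] [InnerProductSpace ℝ H] [CompleteSpace H]
    {I : Type*} [Countable I]
    (T : I → H → H)
    (hfixne : ∀ i, ∃ z, T i z = z)
    (hT : ∀ i, ∀ x z, T i z = z → ⟪x - T i x, z - T i x⟫ ≤ 0)
    (Q : Set H) (hQne : Q.Nonempty) (hQclosed : IsClosed Q) (hQconvex : Convex ℝ Q)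
    (PQ : H → H) (hPQmem : ∀ u, PQ u ∈ Q)
    (hPQmin : ∀ u, ∀ w ∈ Q, ‖PQ u - u‖ ≤ ‖w - u‖)
    -- the control sequence
    (Ik : ℕ → H → Finset I) (hIkne : ∀ k u, (Ik k u).Nonempty)
    (M : ℕ) (hIkM : ∀ k u, (Ik k u).card ≤ M)
    -- the weights
    (lam : I → ℕ → H → ℝ) (hlam01 : ∀ i k u, 0 ≤ lam i k u ∧ lam i k u ≤ 1)
    (hlamsum : ∀ k u, ∑ i ∈ Ik k u, lam i k u = 1)
    -- relaxations and overrelaxations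
    (α : ℕ → ℝ) (hα : ∀ k, 0 < α k ∧ α k ≤ 2)
    (r : ℕ → ℝ) (hrpos : ∀ k, 0 < r k)
    (φ : I → H → ℝ) (hφpos : ∀ i u, 0 < φ i u)
    -- the iterates and the correction-step counter
    (x : ℕ → H) (cnt : ℕ → ℕ)
    (hcnt0 : cnt 0 = 0)
    (hcnt : ∀ k, cnt k = ((Finset.range k).filter (fun n => x n ≠ x (n + 1))).card)
    (hx0 : x 0 ∈ Q)
    (hxrec : ∀ k, x (k + 1) = PQ (x k + α (cnt k) •
      ∑ i ∈ Ik k (x k),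
        (lam i k (x k) *
          if T i (x k) ≠ x k then
            (r (cnt k) / φ i (x k) + ‖T i (x k) - x k‖) / ‖T i (x k) - x k‖
          else 0) • (T i (x k) - x k)))
    -- (i) interior condition
    (hint : (interior (⋂ i, {u | T i u = u}) ∩ Q).Nonempty)
    -- (ii) overrelaxations tend to zero, the series diverges
    (hr0 : Filter.Tendsto r Filter.atTop (nhds 0))
    (hdiv : Filter.Tendsto (fun n => ∑ k ∈ Finset.range n, α k * r k)
      Filter.atTop Filter.atTop)
    -- (iii) uniform bounds for φ on bounded sets
    (hφbd : ∀ S : Set H, Bornology.IsBounded S →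
      ∃ δ Δ : ℝ, 0 < δ ∧ δ ≤ Δ ∧ ∀ i, ∀ u ∈ S, δ ≤ φ i u ∧ φ i u ≤ Δ)
    -- (iv) weights of violated constraints are bounded from below
    (lam0 : ℝ) (hlam0 : 0 < lam0)
    (hlamlb : ∀ i k u, i ∈ Ik k u → T i u ≠ u → lam0 ≤ lam i k u)
    -- (v) the control sequence is well matched with C
    (hwm : ∀ u : H, u ∉ ⋂ i, {v | T i v = v} →
      {k : ℕ | ∃ i ∈ Ik k u, T i u ≠ u}.Infinite)
    -- boundedness of the iterates
    (hbdd : Bornology.IsBounded (Set.range x)) :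
    ∃ k, x k ∈ (⋂ i, {u | T i u = u}) ∩ Q := by
  classical
  by_contra hcon
  push_neg at hcon
  have hxQ : ∀ k, x k ∈ Q := by
    intro k
    cases k with
    | zero => exact hx0
    | succ n => rw [hxrec n]; exact hPQmem _
  have hxC : ∀ k, ∃ i, T i (x k) ≠ x k := by
    intro k
    by_contra h
    push_neg at h
    exact hcon k ⟨Set.mem_iInter.2 fun i => h i, hxQ k⟩
  -- PQ is the identity on Q
  have hPQid : ∀ u ∈ Q, PQ u = u := by
    intro u hu
    have h := hPQmin u u hu
    simp only [sub_self, norm_zero] at h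
    have h2 : ‖PQ u - u‖ = 0 := le_antisymm h (norm_nonneg _)
    rwa [norm_sub_eq_zero_iff] at h2
  have hQnty : Nonempty Q := hQne.to_subtype
  -- variational inequality for PQ
  have hVI : ∀ w : H, ∀ q ∈ Q, ⟪w - PQ w, q - PQ w⟫ ≤ 0 := by
    intro w q hq
    have hproj : ‖w - PQ w‖ = ⨅ p : Q, ‖w - ↑p‖ := by
      refine le_antisymm (le_ciInf fun p => ?_) ?_
      · rw [norm_sub_rev]
        calc ‖PQ w - w‖ ≤ ‖↑p - w‖ := hPQmin w p p.2
          _ = ‖w - ↑p‖ := norm_sub_rev _ _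
      · have hbb : BddBelow (Set.range fun p : Q => ‖w - ↑p‖) := by
          refine ⟨0, ?_⟩
          rintro y ⟨p, rfl⟩
          exact norm_nonneg _
        exact ciInf_le hbb ⟨PQ w, hPQmem w⟩
    exact (norm_eq_iInf_iff_real_inner_le_zero hQconvex (hPQmem w)).1 hproj q hq
  have hPQsq : ∀ w : H, ∀ q ∈ Q, ‖PQ w - q‖ ^ 2 ≤ ‖w - q‖ ^ 2 := by
    intro w q hq
    have h1 := hVI w q hq
    have h2 : w - q = (w - PQ w) + (PQ w - q) := by abel
    rw [h2, norm_add_sq_real]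
    have h3 : ⟪w - PQ w, PQ w - q⟫ = -⟪w - PQ w, q - PQ w⟫ := by
      rw [← inner_neg_right]; congr 1; abel
    nlinarith [sq_nonneg ‖w - PQ w‖]
  -- interior point
  obtain ⟨z, hzint, hzQ⟩ := hint
  obtain ⟨ρ, hρpos, hball⟩ := Metric.isOpen_iff.1 isOpen_interior z hzint
  set ρ' := ρ / 2 with hρ'def
  have hρ' : 0 < ρ' := by positivity
  have hzC' : ∀ i u, T i u ≠ u →
      ⟪T i u - u, u - z⟫ ≤ -(‖T i u - u‖ ^ 2 + ρ' * ‖T i u - u‖) := by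
    intro i u hne
    set y := T i u with hy
    have hn : (0:ℝ) < ‖u - y‖ := by
      rw [norm_pos_iff, sub_ne_zero]
      exact fun h => hne h.symm
    set z' := z + (ρ' / ‖u - y‖) • (u - y) with hz'def
    have hz'ball : z' ∈ Metric.ball z ρ := by
      rw [Metric.mem_ball, dist_eq_norm]
      have hzz : z' - z = (ρ' / ‖u - y‖) • (u - y) := by rw [hz'def]; abel
      rw [hzz, norm_smul, Real.norm_eq_abs, abs_of_pos (by positivity),
        div_mul_cancel₀ _ hn.ne']
      rw [hρ'def]; linarith
    have hz'C : T i z' = z' :=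
      Set.mem_iInter.1 (interior_subset (hball hz'ball)) i
    have h3 := hT i u z' hz'C
    have h4 : z' - y = (z - y) + (ρ' / ‖u - y‖) • (u - y) := by rw [hz'def]; abel
    rw [← hy, h4, inner_add_right, real_inner_smul_right,
      real_inner_self_eq_norm_sq] at h3
    have h5 : ρ' / ‖u - y‖ * ‖u - y‖ ^ 2 = ρ' * ‖u - y‖ := by
      field_simp
    have hB : ⟪u - y, z - u⟫ = ⟪u - y, z - y⟫ - ‖u - y‖ ^ 2 := by
      have hzu : z - u = (z - y) - (u - y) := by abel
      rw [hzu, inner_sub_right, real_inner_self_eq_norm_sq]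
    have hC : ⟪y - u, u - z⟫ = ⟪u - y, z - u⟫ := by
      have e1 : y - u = -(u - y) := by abel
      have e2 : u - z = -(z - u) := by abel
      rw [e1, e2, inner_neg_neg]
    have hD : ‖y - u‖ = ‖u - y‖ := norm_sub_rev _ _
    show ⟪y - u, u - z⟫ ≤ -(‖y - u‖ ^ 2 + ρ' * ‖y - u‖)
    rw [hC, hB, hD]
    nlinarith [h3, h5]
  -- bounds on φ
  obtain ⟨δ, Δ, hδpos, hδΔ, hφS⟩ := hφbd (Set.range x) hbdd
  have hΔpos : 0 < Δ := lt_of_lt_of_le hδpos hδΔ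
  -- recursion in the normalized form
  have hxrec' : ∀ k, x (k + 1) = PQ (x k + α (cnt k) •
      ∑ i ∈ Ik k (x k),
        (lam i k (x k) *
          if T i (x k) - x k ≠ 0 then
            (r (cnt k) / φ i (x k) + ‖T i (x k) - x k‖) / ‖T i (x k) - x k‖
          else 0) • (T i (x k) - x k)) := by
    intro k
    rw [hxrec k]
    have hsum : ∀ i ∈ Ik k (x k),
        (lam i k (x k) *
          if T i (x k) ≠ x k then
            (r (cnt k) / φ i (x k) + ‖T i (x k) - x k‖) / ‖T i (x k) - x k‖
          else 0) • (T i (x k) - x k)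
        = (lam i k (x k) *
          if T i (x k) - x k ≠ 0 then
            (r (cnt k) / φ i (x k) + ‖T i (x k) - x k‖) / ‖T i (x k) - x k‖
          else 0) • (T i (x k) - x k) := by
      intro i _
      by_cases h : T i (x k) = x k
      · simp [h]
      · rw [if_pos h, if_pos (sub_ne_zero.2 h)]
    rw [Finset.sum_congr rfl hsum]
  -- shared per-step hypotheses
  have hγpos : ∀ k i, 0 < r (cnt k) / φ i (x k) + ‖T i (x k) - x k‖ := by
    intro k i
    have h1 := hrpos (cnt k)
    have h2 := hφpos i (x k)
    have h3 := norm_nonneg (T i (x k) - x k)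
    positivity
  have hinner : ∀ k i, T i (x k) - x k ≠ 0 →
      ⟪T i (x k) - x k, x k - z⟫
        ≤ -(‖T i (x k) - x k‖ ^ 2 + ρ' * ‖T i (x k) - x k‖) :=
    fun k i hvi => hzC' i (x k) (sub_ne_zero.1 hvi)
  have hlm' : ∀ k, ∀ i ∈ Ik k (x k), 0 ≤ lam i k (x k) :=
    fun k i _ => (hlam01 i k (x k)).1
  have hlmsum' : ∀ k, ∑ i ∈ Ik k (x k), lam i k (x k) ≤ 1 :=
    fun k => le_of_eq (hlamsum k (x k))
  -- a step with a violated index moves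
  have hstepA : ∀ k, (∃ i ∈ Ik k (x k), T i (x k) ≠ x k) → x (k + 1) ≠ x k := by
    intro k hV hx1
    obtain ⟨i0, hi0mem, hi0ne⟩ := hV
    have hA := core_inner (Ik k (x k)) (fun i => T i (x k) - x k) (x k - z)
      (fun i => lam i k (x k))
      (fun i => r (cnt k) / φ i (x k) + ‖T i (x k) - x k‖) ρ'
      (hlm' k) (fun i _ _ => hγpos k i) (fun i _ hvi => hinner k i hvi)
    have hi0F : i0 ∈ (Ik k (x k)).filter (fun i => T i (x k) - x k ≠ 0) :=
      Finset.mem_filter.2 ⟨hi0mem, sub_ne_zero.2 hi0ne⟩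
    have hpos : 0 < ∑ i ∈ (Ik k (x k)).filter (fun i => T i (x k) - x k ≠ 0),
        lam i k (x k) * (r (cnt k) / φ i (x k) + ‖T i (x k) - x k‖)
          * (‖T i (x k) - x k‖ + ρ') := by
      have hterm : 0 < lam i0 k (x k) * (r (cnt k) / φ i0 (x k) + ‖T i0 (x k) - x k‖)
          * (‖T i0 (x k) - x k‖ + ρ') := by
        have h1 : lam0 ≤ lam i0 k (x k) := hlamlb i0 k (x k) hi0mem hi0ne
        have h2 := hγpos k i0
        have h3 : 0 < ‖T i0 (x k) - x k‖ + ρ' := by positivity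
        have h4 : 0 < lam i0 k (x k) := lt_of_lt_of_le hlam0 h1
        positivity
      refine lt_of_lt_of_le hterm (Finset.single_le_sum
        (f := fun i => lam i k (x k) * (r (cnt k) / φ i (x k) + ‖T i (x k) - x k‖)
          * (‖T i (x k) - x k‖ + ρ')) (fun i hi => ?_) hi0F)
      obtain ⟨his, _⟩ := Finset.mem_filter.mp hi
      have h5 : (0:ℝ) ≤ ‖T i (x k) - x k‖ + ρ' := by positivity
      exact mul_nonneg (mul_nonneg (hlm' k i his) (hγpos k i).le) h5
    have hfix : PQ (x k + α (cnt k) •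
        ∑ i ∈ Ik k (x k),
          (lam i k (x k) *
            if T i (x k) - x k ≠ 0 then
              (r (cnt k) / φ i (x k) + ‖T i (x k) - x k‖) / ‖T i (x k) - x k‖
            else 0) • (T i (x k) - x k)) = x k := by
      rw [← hxrec' k, hx1]
    have hvi2 := hVI (x k + α (cnt k) •
        ∑ i ∈ Ik k (x k),
          (lam i k (x k) *
            if T i (x k) - x k ≠ 0 then
              (r (cnt k) / φ i (x k) + ‖T i (x k) - x k‖) / ‖T i (x k) - x k‖
            else 0) • (T i (x k) - x k)) z hzQ
    rw [hfix, add_sub_cancel_left, real_inner_smul_left] at hvi2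
    have he2 : ⟪∑ i ∈ Ik k (x k),
          (lam i k (x k) *
            if T i (x k) - x k ≠ 0 then
              (r (cnt k) / φ i (x k) + ‖T i (x k) - x k‖) / ‖T i (x k) - x k‖
            else 0) • (T i (x k) - x k), z - x k⟫
        = -⟪∑ i ∈ Ik k (x k),
          (lam i k (x k) *
            if T i (x k) - x k ≠ 0 then
              (r (cnt k) / φ i (x k) + ‖T i (x k) - x k‖) / ‖T i (x k) - x k‖
            else 0) • (T i (x k) - x k), x k - z⟫ := by
      rw [← inner_neg_right]; congr 1; abel
    rw [he2] at hvi2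
    have hαpos := (hα (cnt k)).1
    nlinarith [hA, hvi2, hpos]
  -- a step with no violated index stays put
  have hstep0 : ∀ k, (¬∃ i ∈ Ik k (x k), T i (x k) ≠ x k) → x (k + 1) = x k := by
    intro k hV
    push_neg at hV
    have hd0 : (∑ i ∈ Ik k (x k),
        (lam i k (x k) *
          if T i (x k) - x k ≠ 0 then
            (r (cnt k) / φ i (x k) + ‖T i (x k) - x k‖) / ‖T i (x k) - x k‖
          else 0) • (T i (x k) - x k)) = 0 := by
      refine Finset.sum_eq_zero fun i hi => ?_
      have h0 : T i (x k) - x k = 0 := sub_eq_zero_of_eq (hV i hi)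
      simp [h0]
    rw [hxrec' k, hd0, smul_zero, add_zero]
    exact hPQid _ (hxQ k)
  -- the decrease estimate when the overrelaxation is small
  have hstepB : ∀ k, r (cnt k) ≤ ρ' * δ / 2 →
      (∃ i ∈ Ik k (x k), T i (x k) ≠ x k) →
      ‖x (k + 1) - z‖ ^ 2 ≤ ‖x k - z‖ ^ 2
        - (lam0 * ρ' / Δ) * (α (cnt k) * r (cnt k)) := by
    intro k hrsmall hV
    obtain ⟨i0, hi0mem, hi0ne⟩ := hV
    have hαpos := (hα (cnt k)).1
    have hαle := (hα (cnt k)).2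
    have haγ : ∀ i ∈ Ik k (x k), T i (x k) - x k ≠ 0 →
        α (cnt k) * (r (cnt k) / φ i (x k) + ‖T i (x k) - x k‖)
          ≤ 2 * ‖T i (x k) - x k‖ + ρ' := by
      intro i hi _
      have hγp := hγpos k i
      have hφ1 : δ ≤ φ i (x k) := (hφS i (x k) ⟨k, rfl⟩).1
      have hrφ : r (cnt k) / φ i (x k) ≤ r (cnt k) / δ := by
        gcongr
        exact (hrpos (cnt k)).le
      have hrδ : r (cnt k) / δ ≤ ρ' / 2 := by
        rw [div_le_iff₀ hδpos]; linarith
      nlinarith [hγp, norm_nonneg (T i (x k) - x k)]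
    have hC := core_combined (Ik k (x k)) (fun i => T i (x k) - x k) (x k - z)
      (fun i => lam i k (x k))
      (fun i => r (cnt k) / φ i (x k) + ‖T i (x k) - x k‖) ρ' (α (cnt k))
      hρ' hαpos (hlm' k) (hlmsum' k) (fun i _ _ => hγpos k i)
      (fun i _ hvi => hinner k i hvi) haγ
    have hi0F : i0 ∈ (Ik k (x k)).filter (fun i => T i (x k) - x k ≠ 0) :=
      Finset.mem_filter.2 ⟨hi0mem, sub_ne_zero.2 hi0ne⟩
    have hsumlb : lam0 * (r (cnt k) / Δ) ≤
        ∑ i ∈ (Ik k (x k)).filter (fun i => T i (x k) - x k ≠ 0),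
          lam i k (x k) * (r (cnt k) / φ i (x k) + ‖T i (x k) - x k‖) := by
      have hterm : lam0 * (r (cnt k) / Δ)
          ≤ lam i0 k (x k) * (r (cnt k) / φ i0 (x k) + ‖T i0 (x k) - x k‖) := by
        have h1 : lam0 ≤ lam i0 k (x k) := hlamlb i0 k (x k) hi0mem hi0ne
        have hφ2 : φ i0 (x k) ≤ Δ := (hφS i0 (x k) ⟨k, rfl⟩).2
        have h2 : r (cnt k) / Δ ≤ r (cnt k) / φ i0 (x k) := by
          gcongr
          exacts [(hrpos (cnt k)).le, hφpos i0 (x k)]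
        have h3 := norm_nonneg (T i0 (x k) - x k)
        have hrΔ : 0 < r (cnt k) / Δ := div_pos (hrpos (cnt k)) hΔpos
        nlinarith
      refine le_trans hterm (Finset.single_le_sum
        (f := fun i => lam i k (x k) * (r (cnt k) / φ i (x k) + ‖T i (x k) - x k‖))
        (fun i hi => ?_) hi0F)
      obtain ⟨his, _⟩ := Finset.mem_filter.mp hi
      exact mul_nonneg (hlm' k i his) (hγpos k i).le
    have hexp : ‖x k + α (cnt k) •
        (∑ i ∈ Ik k (x k),
          (lam i k (x k) *
            if T i (x k) - x k ≠ 0 then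
              (r (cnt k) / φ i (x k) + ‖T i (x k) - x k‖) / ‖T i (x k) - x k‖
            else 0) • (T i (x k) - x k)) - z‖ ^ 2
        = ‖x k - z‖ ^ 2 + (2 * α (cnt k) * ⟪∑ i ∈ Ik k (x k),
          (lam i k (x k) *
            if T i (x k) - x k ≠ 0 then
              (r (cnt k) / φ i (x k) + ‖T i (x k) - x k‖) / ‖T i (x k) - x k‖
            else 0) • (T i (x k) - x k), x k - z⟫
          + α (cnt k) ^ 2 * ‖∑ i ∈ Ik k (x k),
          (lam i k (x k) *
            if T i (x k) - x k ≠ 0 then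
              (r (cnt k) / φ i (x k) + ‖T i (x k) - x k‖) / ‖T i (x k) - x k‖
            else 0) • (T i (x k) - x k)‖ ^ 2) := by
      rw [show x k + α (cnt k) •
        (∑ i ∈ Ik k (x k),
          (lam i k (x k) *
            if T i (x k) - x k ≠ 0 then
              (r (cnt k) / φ i (x k) + ‖T i (x k) - x k‖) / ‖T i (x k) - x k‖
            else 0) • (T i (x k) - x k)) - z
        = (x k - z) + α (cnt k) •
        (∑ i ∈ Ik k (x k),
          (lam i k (x k) *
            if T i (x k) - x k ≠ 0 then
              (r (cnt k) / φ i (x k) + ‖T i (x k) - x k‖) / ‖T i (x k) - x k‖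
            else 0) • (T i (x k) - x k)) from by abel]
      rw [norm_add_sq_real, real_inner_smul_right, real_inner_comm,
        norm_smul, Real.norm_eq_abs, abs_of_pos hαpos, mul_pow]
      ring
    have hproj := hPQsq (x k + α (cnt k) •
        ∑ i ∈ Ik k (x k),
          (lam i k (x k) *
            if T i (x k) - x k ≠ 0 then
              (r (cnt k) / φ i (x k) + ‖T i (x k) - x k‖) / ‖T i (x k) - x k‖
            else 0) • (T i (x k) - x k)) z hzQ
    rw [← hxrec' k] at hproj
    have hfinal : -(α (cnt k) * ρ') *
        (∑ i ∈ (Ik k (x k)).filter (fun i => T i (x k) - x k ≠ 0),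
          lam i k (x k) * (r (cnt k) / φ i (x k) + ‖T i (x k) - x k‖))
        ≤ -((lam0 * ρ' / Δ) * (α (cnt k) * r (cnt k))) := by
      have hpos : (0:ℝ) ≤ α (cnt k) * ρ' := by positivity
      have heq : (lam0 * ρ' / Δ) * (α (cnt k) * r (cnt k))
          = (α (cnt k) * ρ') * (lam0 * (r (cnt k) / Δ)) := by
        field_simp
      rw [heq]
      nlinarith [hsumlb, hpos]
    rw [hexp] at hproj
    nlinarith [hproj, hC, hfinal]
  -- counter recursion
  have hcntsucc : ∀ k, cnt (k + 1) = if x k ≠ x (k + 1) then cnt k + 1 else cnt k := by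
    intro k
    rw [hcnt (k + 1), hcnt k, Finset.range_add_one, Finset.filter_insert]
    by_cases h : x k ≠ x (k + 1)
    · rw [if_pos h, if_pos h, Finset.card_insert_of_notMem]
      intro hmem
      exact absurd (Finset.mem_range.1 (Finset.mem_of_mem_filter k hmem)) (lt_irrefl k)
    · rw [if_neg h, if_neg h]
  have hcntmono : Monotone cnt := by
    refine monotone_nat_of_le_succ fun k => ?_
    rw [hcntsucc k]
    by_cases h : x k ≠ x (k + 1)
    · rw [if_pos h]; omega
    · rw [if_neg h]
  -- dichotomy on correction steps
  set Corr := {n : ℕ | x n ≠ x (n + 1)} with hCorr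
  by_cases hfin : Corr.Finite
  · -- Case A: eventually constant, contradiction with well-matchedness
    obtain ⟨K, hK⟩ : ∃ K, ∀ n ∈ Corr, n < K := by
      obtain ⟨b, hb⟩ := hfin.bddAbove
      exact ⟨b + 1, fun n hn => Nat.lt_succ_of_le (hb hn)⟩
    have hstay : ∀ n, K ≤ n → x n = x K := by
      intro n hn
      induction n, hn using Nat.le_induction with
      | base => rfl
      | succ n hn ih =>
        have hnc : n ∉ Corr := fun h => absurd (hK n h) (by omega)
        rw [hCorr] at hnc
        simp only [Set.mem_setOf_eq, not_not] at hnc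
        rw [← hnc, ih]
    have hxKC : x K ∉ ⋂ i, {u | T i u = u} := by
      intro hmem
      obtain ⟨i, hi⟩ := hxC K
      exact hi (Set.mem_iInter.1 hmem i)
    obtain ⟨k, hkmem, hkK⟩ := (hwm (x K) hxKC).exists_gt K
    have hxkK : x k = x K := hstay k hkK.le
    have hmove : x (k + 1) ≠ x k := by
      refine hstepA k ?_
      rw [hxkK]
      exact hkmem
    have hkc : k ∉ Corr := fun h => absurd (hK k h) (by omega)
    rw [hCorr] at hkc
    simp only [Set.mem_setOf_eq, not_not] at hkc
    exact hmove hkc.symm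
  · -- Case B: infinitely many correction steps
    have hinf : Corr.Infinite := hfin
    have hcnttop : Filter.Tendsto cnt Filter.atTop Filter.atTop := by
      refine Filter.tendsto_atTop_atTop_of_monotone hcntmono fun b => ?_
      obtain ⟨t, htsub, htcard⟩ := hinf.exists_subset_card_eq b
      refine ⟨t.sup id + 1, ?_⟩
      rw [hcnt]
      calc b = t.card := htcard.symm
        _ ≤ ((Finset.range (t.sup id + 1)).filter (fun n => x n ≠ x (n + 1))).card := by
          refine Finset.card_le_card fun i hi => ?_
          refine Finset.mem_filter.2 ⟨Finset.mem_range.2 ?_, htsub hi⟩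
          exact Nat.lt_succ_of_le (Finset.le_sup (f := id) hi)
    have hev : ∀ᶠ k in Filter.atTop, r (cnt k) < ρ' * δ / 2 :=
      (hr0.comp hcnttop).eventually_lt_const (by positivity)
    obtain ⟨K0, hK0⟩ := Filter.eventually_atTop.1 hev
    have hc0pos : 0 < lam0 * ρ' / Δ := by positivity
    have main : ∀ k, K0 ≤ k →
        ‖x k - z‖ ^ 2 + (lam0 * ρ' / Δ) * ∑ m ∈ Finset.Ico (cnt K0) (cnt k), α m * r m
          ≤ ‖x K0 - z‖ ^ 2 := by
      intro k hk
      induction k, hk using Nat.le_induction with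
      | base => simp
      | succ k hk ih =>
        have hr' : r (cnt k) ≤ ρ' * δ / 2 := (hK0 k hk).le
        by_cases hV : ∃ i ∈ Ik k (x k), T i (x k) ≠ x k
        · have hdec := hstepB k hr' hV
          have hne := hstepA k hV
          have hcnts : cnt (k + 1) = cnt k + 1 := by
            rw [hcntsucc k, if_pos (Ne.symm hne)]
          have hmono : cnt K0 ≤ cnt k := hcntmono hk
          rw [hcnts, Finset.sum_Ico_succ_top hmono]
          have hins : 0 ≤ α (cnt k) * r (cnt k) :=
            mul_nonneg (hα (cnt k)).1.le (hrpos (cnt k)).le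
          nlinarith [ih, hdec]
        · have heq := hstep0 k hV
          have hcnts : cnt (k + 1) = cnt k := by
            rw [hcntsucc k, if_neg (by simp [heq.symm])]
          rw [hcnts, heq]
          exact ih
    -- divergence of the partial sums
    have hg : Filter.Tendsto (fun n => ∑ m ∈ Finset.Ico (cnt K0) n, α m * r m)
        Filter.atTop Filter.atTop := by
      have h1 : Filter.Tendsto
          (fun n => (∑ m ∈ Finset.range n, α m * r m)
            + -(∑ m ∈ Finset.range (cnt K0), α m * r m))
          Filter.atTop Filter.atTop :=
        Filter.tendsto_atTop_add_const_right _ _ hdiv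
      refine h1.congr' ?_
      filter_upwards [Filter.eventually_ge_atTop (cnt K0)] with n hn
      rw [Finset.sum_Ico_eq_sub _ hn]
      ring
    have hg2 : Filter.Tendsto (fun k => ∑ m ∈ Finset.Ico (cnt K0) (cnt k), α m * r m)
        Filter.atTop Filter.atTop := hg.comp hcnttop
    have hbig := (hg2.eventually_ge_atTop (‖x K0 - z‖ ^ 2 / (lam0 * ρ' / Δ) + 1)).and
      (Filter.eventually_ge_atTop K0)
    obtain ⟨k, hks, hkK0⟩ := hbig.exists
    have hmain := main k hkK0
    have hnn : 0 ≤ ‖x k - z‖ ^ 2 := sq_nonneg _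
    have hdiv2 : (lam0 * ρ' / Δ) * (‖x K0 - z‖ ^ 2 / (lam0 * ρ' / Δ)) = ‖x K0 - z‖ ^ 2 :=
      mul_div_cancel₀ _ hc0pos.ne'
    nlinarith [mul_le_mul_of_nonneg_left hks hc0pos.le]
end

section
/- Let H be a real Hilbert space, let I be a countable index set, and for each i ∈ I let T_i : H → H be a cutter with C_i := Fix T_i and C := ⋂_{i ∈ I} C_i. Let Q ⊆ H be nonempty, closed and convex. Consider the method x_0 ∈ Q, x_{k+1} := P_Q( x_k + α_{[k]} Σ_{i ∈ I_k(x_k)} λ_{i,k}(x_k) β_{i,k}(x_k)(T_i(x_k) − x_k) ) with φ_i(x) := 1 for all i and x, where [k] := #{0 ≤ n ≤ k−1 : x_n ≠ x_{n+1}} and β_{i,k}(x) := (r_{[k]} + ‖T_i(x) − x‖)/‖T_i(x) − x‖ if T_i(x) ≠ x and 0 otherwise. Assume (i) int(C) ∩ Q ≠ ∅; (ii) r_k → 0 and Σ_{k=0}^∞ α_k r_k = ∞ with α_k ∈ (0,2]; (iv) λ_{i,k}(x) ≥ λ > 0 for all x, k and i ∈ I_k(x) ∩ I_+(x), with Σ_{i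 ∈ I_k(x)} λ_{i,k}(x) = 1; (v) the control sequence {I_k} (with sup_{x,k} #(I_k(x)) < ∞) is well matched with C. Then the sequence {x_k} is bounded, and consequently x_k ∈ C ∩ Q for some k. -/
/-!
Pick `z ∈ Q` with `closedBall z ρ ⊆ C`. Testing the cutter inequality of `T_i` at every point of
that ball gives `‖T_i x - x‖ (‖T_i x - x‖ + ρ) ≤ ⟪T_i x - x, z - x⟫`. Hence a step that meets a
violated constraint moves the iterate, and once `2 r_{[k]} ≤ ρ` it decreases `‖x_k - z‖²` by at
least `ρ λ α_{[k]} r_{[k]}` (Jensen's inequality controls the quadratic term, `α ≤ 2` does the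
rest). If the iterates never reached `C`, well-matchedness would rule out getting stuck, so
`[k] → ∞`, and by (ii) the decreases would add up to `∞`. Once `x_k ∈ C` the iteration is
stationary, so the sequence is bounded.
-/

open scoped RealInnerProductSpace Classical
open Finset Filter

lemma proj_eq_self {E : Type*} [NormedAddCommGroup E] {Q : Set E} {P : E → E}
    (hPmin : ∀ u, ∀ w ∈ Q, ‖P u - u‖ ≤ ‖w - u‖) {u : E} (hu : u ∈ Q) : P u = u := by
  simpa [sub_eq_zero] using hPmin u u hu

section
variable {H : Type*} [NormedAddCommGroup H] [InnerProductSpace ℝ H] {ι : Type*} {Q : Set H}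
  {P : H → H}

lemma norm_mul_le_inner_of_forall_closedBall {u t z : H} {ρ : ℝ} (hρ : 0 ≤ ρ)
    (h : ∀ y ∈ Metric.closedBall z ρ, ⟪u - t, y - t⟫ ≤ 0) :
    ‖t - u‖ * (‖t - u‖ + ρ) ≤ ⟪t - u, z - u⟫ := by
  set v := t - u
  rcases eq_or_ne v 0 with hv | hv
  · simp [hv]
  have hv' : 0 < ‖v‖ := norm_pos_iff.2 hv
  -- testing at the point of the ball furthest along `u - t` produces the extra `ρ ‖t - u‖`
  have hy : z - (ρ / ‖v‖) • v ∈ Metric.closedBall z ρ := by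
    rw [mem_closedBall_iff_norm, sub_sub_cancel_left, norm_neg, norm_smul,
      Real.norm_of_nonneg (by positivity), div_mul_cancel₀ _ hv'.ne']
  have key := h _ hy
  have e1 : u - t = -v := (neg_sub t u).symm
  have e2 : z - (ρ / ‖v‖) • v - t = (z - u) - (ρ / ‖v‖) • v - v := by simp only [v]; abel
  rw [e1, e2, inner_neg_left, inner_sub_right, inner_sub_right, real_inner_smul_right,
    real_inner_self_eq_norm_sq] at key
  have e3 : ρ / ‖v‖ * ‖v‖ ^ 2 = ρ * ‖v‖ := by field_simp
  nlinarith

/-- `β_{i,k}(x) (T_i x - x)` of the paper, with `v = T_i x - x`; at `v = 0` the division by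
`‖v‖ = 0` is junk but harmless, as the result is `0` either way. -/
noncomputable def overrelax (r : ℝ) (v : H) : H := ((r + ‖v‖) / ‖v‖) • v

@[simp] lemma overrelax_zero (r : ℝ) : overrelax r (0 : H) = 0 := by simp [overrelax]

lemma norm_overrelax {r : ℝ} {v : H} (hr : 0 ≤ r) (hv : v ≠ 0) :
    ‖overrelax r v‖ = r + ‖v‖ := by
  rw [overrelax, norm_smul, Real.norm_of_nonneg (by positivity),
    div_mul_cancel₀ _ (norm_ne_zero_iff.2 hv)]

lemma smul_ite_eq_smul_overrelax (l r : ℝ) (t u : H) :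
    (l * if t ≠ u then (r + ‖t - u‖) / ‖t - u‖ else 0) • (t - u) = l • overrelax r (t - u) := by
  by_cases h : t = u
  · simp [h]
  · rw [if_pos h, mul_smul, overrelax]

lemma norm_overrelax_mul_le_inner {r ρ : ℝ} {v p : H} (hr : 0 ≤ r)
    (h : ‖v‖ * (‖v‖ + ρ) ≤ ⟪v, p⟫) :
    ‖overrelax r v‖ * (‖overrelax r v‖ - r + ρ) ≤ ⟪overrelax r v, p⟫ := by
  rcases eq_or_ne v 0 with rfl | hv
  · simp
  have hv' : 0 < ‖v‖ := norm_pos_iff.2 hv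
  rw [norm_overrelax hr hv, overrelax, real_inner_smul_left]
  calc (r + ‖v‖) * (r + ‖v‖ - r + ρ) = (r + ‖v‖) / ‖v‖ * (‖v‖ * (‖v‖ + ρ)) := by
        field_simp; ring
    _ ≤ (r + ‖v‖) / ‖v‖ * ⟪v, p⟫ := by gcongr

lemma mul_norm_overrelax_le_inner {r ρ : ℝ} {v p : H} (hr : 0 ≤ r)
    (h : ‖v‖ * (‖v‖ + ρ) ≤ ⟪v, p⟫) : ρ * ‖overrelax r v‖ ≤ ⟪overrelax r v, p⟫ := by
  rcases eq_or_ne v 0 with rfl | hv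
  · simp
  have := norm_overrelax_mul_le_inner hr h
  rw [norm_overrelax hr hv] at this ⊢
  nlinarith [norm_nonneg v]

lemma norm_smul_sum_sub_sq_le (S : Finset ι) {lam : ι → ℝ} {y : ι → H} {p : H} {r ρ a : ℝ}
    (hlam : ∀ i ∈ S, 0 ≤ lam i) (hsum : ∑ i ∈ S, lam i = 1)
    (hy : ∀ i ∈ S, ‖y i‖ * (‖y i‖ - r + ρ) ≤ ⟪y i, p⟫)
    (ha0 : 0 ≤ a) (ha2 : a ≤ 2) (hrρ : 2 * r ≤ ρ) :
    ‖a • ∑ i ∈ S, lam i • y i - p‖ ^ 2 ≤ ‖p‖ ^ 2 - a * ρ * ∑ i ∈ S, lam i * ‖y i‖ := by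
  set w := ∑ i ∈ S, lam i • y i
  set m := ∑ i ∈ S, lam i * ‖y i‖
  set q := ∑ i ∈ S, lam i * ‖y i‖ ^ 2
  have hm : 0 ≤ m := sum_nonneg fun i hi => mul_nonneg (hlam i hi) (norm_nonneg _)
  have hq : 0 ≤ q := sum_nonneg fun i hi => mul_nonneg (hlam i hi) (sq_nonneg _)
  have hw : ‖w‖ ≤ m := (norm_sum_le _ _).trans_eq <| sum_congr rfl fun i hi => by
    rw [norm_smul, Real.norm_of_nonneg (hlam i hi)]
  have hmq : m ^ 2 ≤ q := by
    simpa [hsum] using sum_sq_le_sum_mul_sum_of_sq_le_mul S hlam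
      (fun i hi => mul_nonneg (hlam i hi) (sq_nonneg ‖y i‖)) (fun i _ => le_of_eq (by ring))
  have hwq : ‖w‖ ^ 2 ≤ q := (pow_le_pow_left₀ (norm_nonneg w) hw 2).trans hmq
  have hinner : q + (ρ - r) * m ≤ ⟪w, p⟫ := by
    rw [sum_inner, mul_sum, ← sum_add_distrib]
    refine sum_le_sum fun i hi => ?_
    rw [real_inner_smul_left]
    nlinarith [mul_le_mul_of_nonneg_left (hy i hi) (hlam i hi)]
  rw [norm_sub_sq_real, norm_smul, real_inner_smul_left, Real.norm_of_nonneg ha0]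
  nlinarith [mul_le_mul_of_nonneg_left hwq (sq_nonneg a),
    mul_nonneg (mul_nonneg ha0 (sub_nonneg.2 ha2)) hq,
    mul_nonneg (mul_nonneg ha0 hm) (sub_nonneg.2 hrρ)]

lemma mul_sum_le_inner_sum (S : Finset ι) {lam : ι → ℝ} {y : ι → H} {p : H} {ρ : ℝ}
    (hlam : ∀ i ∈ S, 0 ≤ lam i) (hy : ∀ i ∈ S, ρ * ‖y i‖ ≤ ⟪y i, p⟫) :
    ρ * ∑ i ∈ S, lam i * ‖y i‖ ≤ ⟪∑ i ∈ S, lam i • y i, p⟫ := by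
  rw [sum_inner, mul_sum]
  refine sum_le_sum fun i hi => ?_
  rw [real_inner_smul_left, mul_left_comm]
  exact mul_le_mul_of_nonneg_left (hy i hi) (hlam i hi)

lemma mul_le_sum_norm_overrelax (S : Finset ι) {lam : ι → ℝ} {v : ι → H} {r lam0 : ℝ}
    (hlam : ∀ i ∈ S, 0 ≤ lam i) (hr : 0 ≤ r) {i0 : ι} (hi0 : i0 ∈ S) (hv : v i0 ≠ 0)
    (hlam0 : lam0 ≤ lam i0) :
    lam0 * r ≤ ∑ i ∈ S, lam i * ‖overrelax r (v i)‖ := by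
  refine le_trans ?_ (single_le_sum (fun i hi => mul_nonneg (hlam i hi) (norm_nonneg _)) hi0)
  rw [norm_overrelax hr hv]
  exact mul_le_mul hlam0 (le_add_of_nonneg_right (norm_nonneg _)) hr (hlam i0 hi0)

lemma inner_sub_proj_le_zero (hQ : Convex ℝ Q) (hPmem : ∀ u, P u ∈ Q)
    (hPmin : ∀ u, ∀ w ∈ Q, ‖P u - u‖ ≤ ‖w - u‖) (u : H) {q : H} (hq : q ∈ Q) :
    ⟪u - P u, q - P u⟫ ≤ 0 := by
  have : Nonempty Q := ⟨⟨_, hPmem u⟩⟩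
  refine (norm_eq_iInf_iff_real_inner_le_zero hQ (hPmem u)).1 (le_antisymm ?_ ?_) q hq
  · exact le_ciInf fun w => by simpa only [norm_sub_rev] using hPmin u w w.2
  · exact ciInf_le ⟨0, fun _ ⟨_, h⟩ => h ▸ norm_nonneg _⟩ (⟨P u, hPmem u⟩ : Q)

lemma norm_proj_sub_sq_le (hQ : Convex ℝ Q) (hPmem : ∀ u, P u ∈ Q)
    (hPmin : ∀ u, ∀ w ∈ Q, ‖P u - u‖ ≤ ‖w - u‖) (u : H) {q : H} (hq : q ∈ Q) :
    ‖P u - q‖ ^ 2 ≤ ‖u - q‖ ^ 2 := by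
  have h := inner_sub_proj_le_zero hQ hPmem hPmin u hq
  have e : u - q = (u - P u) - (q - P u) := by abel
  rw [← neg_sub q (P u), norm_neg, e, norm_sub_sq_real (u - P u)]
  nlinarith [sq_nonneg ‖u - P u‖]

lemma proj_add_ne_self (hQ : Convex ℝ Q) (hPmem : ∀ u, P u ∈ Q)
    (hPmin : ∀ u, ∀ w ∈ Q, ‖P u - u‖ ≤ ‖w - u‖) {u w q : H} (hq : q ∈ Q)
    (hw : 0 < ⟪w, q - u⟫) : P (u + w) ≠ u := by
  intro h
  have := inner_sub_proj_le_zero hQ hPmem hPmin (u + w) hq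
  rw [h, add_sub_cancel_left] at this
  linarith

lemma proj_add_smul_sum_overrelax_of_forall_eq_zero (hPmin : ∀ u, ∀ w ∈ Q, ‖P u - u‖ ≤ ‖w - u‖)
    (S : Finset ι) (lam : ι → ℝ) {v : ι → H} (r a : ℝ) {u : H} (hu : u ∈ Q)
    (hv : ∀ i ∈ S, v i = 0) : P (u + a • ∑ i ∈ S, lam i • overrelax r (v i)) = u := by
  rw [sum_eq_zero fun i hi => by rw [hv i hi, overrelax_zero, smul_zero], smul_zero, add_zero,
    proj_eq_self hPmin hu]

lemma proj_add_smul_sum_overrelax (hQ : Convex ℝ Q) (hPmem : ∀ u, P u ∈ Q)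
    (hPmin : ∀ u, ∀ w ∈ Q, ‖P u - u‖ ≤ ‖w - u‖) (S : Finset ι) {lam : ι → ℝ}
    {v : ι → H} {u z : H} {r ρ a lam0 : ℝ} (hz : z ∈ Q) (hlam : ∀ i ∈ S, 0 ≤ lam i)
    (hsum : ∑ i ∈ S, lam i = 1) (hv : ∀ i ∈ S, ‖v i‖ * (‖v i‖ + ρ) ≤ ⟪v i, z - u⟫)
    (hr : 0 < r) (hρ : 0 < ρ) (ha0 : 0 < a) (ha2 : a ≤ 2) {i0 : ι} (hi0 : i0 ∈ S)
    (hvi0 : v i0 ≠ 0) (hlam0 : lam0 ≤ lam i0) (hlam0pos : 0 < lam0) :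
    P (u + a • ∑ i ∈ S, lam i • overrelax r (v i)) ≠ u ∧
      (2 * r ≤ ρ → ‖P (u + a • ∑ i ∈ S, lam i • overrelax r (v i)) - z‖ ^ 2 ≤
        ‖u - z‖ ^ 2 - ρ * lam0 * (a * r)) := by
  set w := ∑ i ∈ S, lam i • overrelax r (v i)
  have hm := mul_le_sum_norm_overrelax S hlam hr.le hi0 hvi0 hlam0
  constructor
  · refine proj_add_ne_self hQ hPmem hPmin hz ?_
    have hinner : ρ * _ ≤ ⟪w, z - u⟫ := mul_sum_le_inner_sum S hlam
      fun i hi => mul_norm_overrelax_le_inner hr.le (hv i hi)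
    rw [real_inner_smul_left]
    refine mul_pos ha0 ?_
    nlinarith [mul_le_mul_of_nonneg_left hm hρ.le, mul_pos hρ (mul_pos hlam0pos hr)]
  · intro hrρ
    have hdesc := norm_smul_sum_sub_sq_le S hlam hsum
      (fun i hi => norm_overrelax_mul_le_inner hr.le (hv i hi)) ha0.le ha2 hrρ
    calc ‖P (u + a • w) - z‖ ^ 2 ≤ ‖a • w - (z - u)‖ ^ 2 := by
          rw [show a • w - (z - u) = u + a • w - z by abel]
          exact norm_proj_sub_sq_le hQ hPmem hPmin _ hz
      _ ≤ ‖u - z‖ ^ 2 - ρ * lam0 * (a * r) := by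
          rw [norm_sub_rev z u] at hdesc
          nlinarith [mul_le_mul_of_nonneg_left hm (mul_pos ha0 hρ).le]

end

section
variable {X : Type*} (x : ℕ → X)

/-- The counter `[k]` of the paper. -/
noncomputable def moveCount (k : ℕ) : ℕ :=
  ((Finset.range k).filter (fun n => x n ≠ x (n + 1))).card

lemma moveCount_succ (k : ℕ) :
    moveCount x (k + 1) = moveCount x k + if x k ≠ x (k + 1) then 1 else 0 := by
  simp only [moveCount, card_filter, sum_range_succ]

lemma moveCount_succ_of_eq {k : ℕ} (h : x k = x (k + 1)) :
    moveCount x (k + 1) = moveCount x k := by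
  simp [moveCount_succ, h]

lemma moveCount_succ_of_ne {k : ℕ} (h : x k ≠ x (k + 1)) :
    moveCount x (k + 1) = moveCount x k + 1 := by
  simp [moveCount_succ, h]

lemma monotone_moveCount : Monotone (moveCount x) :=
  monotone_nat_of_le_succ fun k => by rw [moveCount_succ]; split <;> omega

lemma exists_forall_ge_eq_of_bddAbove_moveCount (h : BddAbove (Set.range (moveCount x))) :
    ∃ K, ∀ k ≥ K, x k = x K := by
  have hlim := tendsto_atTop_ciSup (monotone_moveCount x) h
  rw [nhds_discrete, tendsto_pure] at hlim
  obtain ⟨K, hK⟩ := eventually_atTop.1 hlim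
  refine eventuallyConst_atTop.1 (eventuallyConst_atTop_nat.2 ⟨K, fun k hk => ?_⟩)
  by_contra hne
  have := moveCount_succ_of_ne x (Ne.symm hne)
  have := hK k hk
  have := hK (k + 1) (by omega)
  omega

lemma add_sum_moveCount_succ_le (V : X → ℝ) (c : ℕ → ℝ) {k : ℕ}
    (h : x k ≠ x (k + 1) → V (x (k + 1)) ≤ V (x k) - c (moveCount x k)) :
    V (x (k + 1)) + ∑ m ∈ range (moveCount x (k + 1)), c m ≤
      V (x k) + ∑ m ∈ range (moveCount x k), c m := by
  by_cases hk : x k = x (k + 1)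
  · rw [moveCount_succ_of_eq x hk, hk]
  · rw [moveCount_succ_of_ne x hk, sum_range_succ]
    linarith [h hk]

theorem exists_mem_of_moveCount_descent {C : Set X} {V : X → ℝ} {c : ℕ → ℝ}
    (hV : ∀ u, 0 ≤ V u)
    (hc : Tendsto (fun n => ∑ m ∈ range n, c m) atTop atTop)
    (hmove : ∀ u ∉ C, ∃ᶠ k in atTop, x k = u → x k ≠ x (k + 1))
    (hdesc : ∀ᶠ m in atTop, ∀ k, moveCount x k = m → x k ≠ x (k + 1) →
      V (x (k + 1)) ≤ V (x k) - c m) :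
    ∃ k, x k ∈ C := by
  by_contra! hC
  by_cases hb : BddAbove (Set.range (moveCount x))
  · obtain ⟨K, hK⟩ := exists_forall_ge_eq_of_bddAbove_moveCount x hb
    obtain ⟨k, hk, hkK⟩ := ((hmove _ (hC K)).and_eventually (eventually_ge_atTop K)).exists
    exact hk (hK k hkK) ((hK k hkK).trans (hK (k + 1) (by omega)).symm)
  · have hcnt := tendsto_atTop_atTop_of_monotone' (monotone_moveCount x) hb
    obtain ⟨K, hK⟩ := eventually_atTop.1 (hcnt.eventually hdesc)
    have hΦ : ∀ k ≥ K, V (x k) + ∑ m ∈ range (moveCount x k), c m ≤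
        V (x K) + ∑ m ∈ range (moveCount x K), c m := by
      intro k hk
      induction k, hk using Nat.le_induction with
      | base => exact le_rfl
      | succ k hk ih => exact (add_sum_moveCount_succ_le x V c (hK k hk k rfl)).trans ih
    obtain ⟨k, hk, hkK⟩ :=
      (((hc.comp hcnt).eventually_gt_atTop
        (V (x K) + ∑ m ∈ range (moveCount x K), c m)).and (eventually_ge_atTop K)).exists
    linarith [hΦ k hkK, hV (x k), show _ < ∑ m ∈ range (moveCount x k), c m from hk]

end

theorem stmt12_general {H : Type*} [NormedAddCommGroup H] [InnerProductSpace ℝ H]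
    {I : Type*}
    (T : I → H → H)
    (hT : ∀ i, ∀ x z, T i z = z → ⟪x - T i x, z - T i x⟫ ≤ 0)
    (Q : Set H) (hQconvex : Convex ℝ Q)
    (PQ : H → H) (hPQmem : ∀ u, PQ u ∈ Q)
    (hPQmin : ∀ u, ∀ w ∈ Q, ‖PQ u - u‖ ≤ ‖w - u‖)
    -- the control sequence
    (Ik : ℕ → H → Finset I)
    -- the weights
    (lam : I → ℕ → H → ℝ) (hlam01 : ∀ i k u, 0 ≤ lam i k u ∧ lam i k u ≤ 1)
    (hlamsum : ∀ k u, ∑ i ∈ Ik k u, lam i k u = 1)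
    -- relaxations and overrelaxations
    (α : ℕ → ℝ) (hα : ∀ k, 0 < α k ∧ α k ≤ 2)
    (r : ℕ → ℝ) (hrpos : ∀ k, 0 < r k)
    -- the iterates and the correction-step counter
    (x : ℕ → H) (cnt : ℕ → ℕ)
    (hcnt : ∀ k, cnt k = ((Finset.range k).filter (fun n => x n ≠ x (n + 1))).card)
    (hx0 : x 0 ∈ Q)
    (hxrec : ∀ k, x (k + 1) = PQ (x k + α (cnt k) •
      ∑ i ∈ Ik k (x k),
        (lam i k (x k) *
          if T i (x k) ≠ x k then
            (r (cnt k) + ‖T i (x k) - x k‖) / ‖T i (x k) - x k‖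
          else 0) • (T i (x k) - x k)))
    -- (i) interior condition
    (hint : (interior (⋂ i, {u | T i u = u}) ∩ Q).Nonempty)
    -- (ii) overrelaxations tend to zero, the series diverges
    (hr0 : Filter.Tendsto r Filter.atTop (nhds 0))
    (hdiv : Filter.Tendsto (fun n => ∑ k ∈ Finset.range n, α k * r k)
      Filter.atTop Filter.atTop)
    -- (iv) weights of violated constraints are bounded from below
    (lam0 : ℝ) (hlam0 : 0 < lam0)
    (hlamlb : ∀ i k u, i ∈ Ik k u → T i u ≠ u → lam0 ≤ lam i k u)
    -- (v) the control sequence is well matched with C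
    (hwm : ∀ u : H, u ∉ ⋂ i, {v | T i v = v} →
      {k : ℕ | ∃ i ∈ Ik k u, T i u ≠ u}.Infinite)
 :
    Bornology.IsBounded (Set.range x) ∧ ∃ k, x k ∈ (⋂ i, {u | T i u = u}) ∩ Q := by
  obtain ⟨z, hzC, hzQ⟩ := hint
  obtain ⟨ρ, hρ, hball⟩ := Metric.nhds_basis_closedBall.mem_iff.1 (isOpen_interior.mem_nhds hzC)
  have hcut : ∀ i u, ‖T i u - u‖ * (‖T i u - u‖ + ρ) ≤ ⟪T i u - u, z - u⟫ := fun i u =>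
    norm_mul_le_inner_of_forall_closedBall hρ.le fun y hy =>
      hT i u y (Set.mem_iInter.1 (interior_subset (hball hy)) i)
  have hrec : ∀ k, x (k + 1) = PQ (x k + α (cnt k) •
      ∑ i ∈ Ik k (x k), lam i k (x k) • overrelax (r (cnt k)) (T i (x k) - x k)) := by
    simpa only [smul_ite_eq_smul_overrelax] using hxrec
  have hxQ : ∀ k, x k ∈ Q
    | 0 => hx0
    | k + 1 => hrec k ▸ hPQmem _
  have hstay : ∀ k, (∀ i ∈ Ik k (x k), T i (x k) = x k) → x (k + 1) = x k := fun k h =>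
    (hrec k).trans <| proj_add_smul_sum_overrelax_of_forall_eq_zero hPQmin _ _ _ _ (hxQ k)
      fun i hi => sub_eq_zero.2 (h i hi)
  have hstep : ∀ k, ∀ i0 ∈ Ik k (x k), T i0 (x k) ≠ x k → x (k + 1) ≠ x k ∧
      (2 * r (cnt k) ≤ ρ → ‖x (k + 1) - z‖ ^ 2 ≤
        ‖x k - z‖ ^ 2 - ρ * lam0 * (α (cnt k) * r (cnt k))) := fun k i0 hi0 hne => by
    rw [hrec k]
    exact proj_add_smul_sum_overrelax hQconvex hPQmem hPQmin _ hzQ (fun i _ => (hlam01 i k _).1)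
      (hlamsum k _) (fun i _ => hcut i _) (hrpos _) hρ (hα _).1 (hα _).2 hi0 (sub_ne_zero.2 hne)
      (hlamlb i0 k _ hi0 hne) hlam0
  obtain rfl : cnt = moveCount x := funext hcnt
  obtain ⟨k, hk⟩ : ∃ k, x k ∈ ⋂ i, {u | T i u = u} := by
    refine exists_mem_of_moveCount_descent x (V := fun u => ‖u - z‖ ^ 2)
      (c := fun m => ρ * lam0 * (α m * r m)) (fun _ => sq_nonneg _) ?_ ?_ ?_
    · simpa only [← mul_sum] using hdiv.const_mul_atTop (mul_pos hρ hlam0)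
    · intro u hu
      refine (Nat.frequently_atTop_iff_infinite.2 (hwm u hu)).mono ?_
      rintro k ⟨i, hi, hne⟩ rfl
      exact (hstep k i hi hne).1.symm
    · filter_upwards [hr0.eventually (ge_mem_nhds (half_pos hρ))] with m hm k hkm hmove
      subst hkm
      obtain ⟨i, hi, hne⟩ : ∃ i ∈ Ik k (x k), T i (x k) ≠ x k := by
        by_contra! h
        exact hmove (hstay k h).symm
      exact (hstep k i hi hne).2 (by linarith)
  have hconst : ∀ n ≥ k, x n = x k := by
    intro n hn
    induction n, hn using Nat.le_induction with
    | base => rfl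
    | succ n _ ih => rw [hstay n fun i _ => by rw [ih]; exact Set.mem_iInter.1 hk i, ih]
  exact ⟨Metric.isBounded_range_of_tendsto x (tendsto_atTop_of_eventually_const hconst),
    k, hk, hxQ k⟩

/-- Example 4.8 (`φ_i ≡ 1`): under conditions (i), (ii), (iv), (v), the sequence generated
by the overrelaxed method with `φ_i(x) := 1` is bounded and reaches `C ∩ Q` in finitely
many steps. -/
theorem stmt12 {H : Type*} [NormedAddCommGroup H] [InnerProductSpace ℝ H] [CompleteSpace H]
    {I : Type*} [Countable I]
    (T : I → H → H)
    (hfixne : ∀ i, ∃ z, T i z = z)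
    (hT : ∀ i, ∀ x z, T i z = z → ⟪x - T i x, z - T i x⟫ ≤ 0)
    (Q : Set H) (hQne : Q.Nonempty) (hQclosed : IsClosed Q) (hQconvex : Convex ℝ Q)
    (PQ : H → H) (hPQmem : ∀ u, PQ u ∈ Q)
    (hPQmin : ∀ u, ∀ w ∈ Q, ‖PQ u - u‖ ≤ ‖w - u‖)
    -- the control sequence
    (Ik : ℕ → H → Finset I) (hIkne : ∀ k u, (Ik k u).Nonempty)
    (M : ℕ) (hIkM : ∀ k u, (Ik k u).card ≤ M)
    -- the weights
    (lam : I → ℕ → H → ℝ) (hlam01 : ∀ i k u, 0 ≤ lam i k u ∧ lam i k u ≤ 1)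
    (hlamsum : ∀ k u, ∑ i ∈ Ik k u, lam i k u = 1)
    -- relaxations and overrelaxations
    (α : ℕ → ℝ) (hα : ∀ k, 0 < α k ∧ α k ≤ 2)
    (r : ℕ → ℝ) (hrpos : ∀ k, 0 < r k)
    -- the iterates and the correction-step counter
    (x : ℕ → H) (cnt : ℕ → ℕ)
    (hcnt0 : cnt 0 = 0)
    (hcnt : ∀ k, cnt k = ((Finset.range k).filter (fun n => x n ≠ x (n + 1))).card)
    (hx0 : x 0 ∈ Q)
    (hxrec : ∀ k, x (k + 1) = PQ (x k + α (cnt k) •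
      ∑ i ∈ Ik k (x k),
        (lam i k (x k) *
          if T i (x k) ≠ x k then
            (r (cnt k) + ‖T i (x k) - x k‖) / ‖T i (x k) - x k‖
          else 0) • (T i (x k) - x k)))
    -- (i) interior condition
    (hint : (interior (⋂ i, {u | T i u = u}) ∩ Q).Nonempty)
    -- (ii) overrelaxations tend to zero, the series diverges
    (hr0 : Filter.Tendsto r Filter.atTop (nhds 0))
    (hdiv : Filter.Tendsto (fun n => ∑ k ∈ Finset.range n, α k * r k)
      Filter.atTop Filter.atTop)
    -- (iv) weights of violated constraints are bounded from below
    (lam0 : ℝ) (hlam0 : 0 < lam0)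
    (hlamlb : ∀ i k u, i ∈ Ik k u → T i u ≠ u → lam0 ≤ lam i k u)
    -- (v) the control sequence is well matched with C
    (hwm : ∀ u : H, u ∉ ⋂ i, {v | T i v = v} →
      {k : ℕ | ∃ i ∈ Ik k u, T i u ≠ u}.Infinite)
 :
    Bornology.IsBounded (Set.range x) ∧ ∃ k, x k ∈ (⋂ i, {u | T i u = u}) ∩ Q :=
  stmt12_general T hT Q hQconvex PQ hPQmem hPQmin Ik lam hlam01 hlamsum α hα r hrpos x cnt hcnt hx0
    hxrec hint hr0 hdiv lam0 hlam0 hlamlb hwm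
end

section
/- Let H be a real Hilbert space, let I be a countable index set, and for each i ∈ I let f_i : H → ℝ be convex and lower semicontinuous with C_i := {x : f_i(x) ≤ 0} and C := ⋂nonempty_{i ∈ I} C_i; let g_i : H → H be a selection of the subdifferential, g_i(x) ∈ ∂f_i(x). Let Q ⊆ H be nonempty, closed and convex. Consider the method x_0 ∈ Q, x_{k+1} := P_Q( x_k − α_{[k]} Σ_{i ∈ I_k(x_k) ∩ I_+(x_k)} λ_{i,k}(x_k) ((r_{[k]} + f_i(x_k))/‖g_i(x_k)‖²) g_i(x_k) ), where [k] := #{0 ≤ n ≤ k−1 : x_n ≠ x_{n+1}} and I_+(x) := {i : f_i(x) > 0}. Assume: (i') f(z) := sup_{i ∈ I} f_i(z) < 0 for some z ∈ Q; (ii') r_k → 0 and Σ_{k=0}^∞ α_k r_k = ∞ with α_k ∈ (0,2]; (iii') ⋃_{i ∈ I} ∂f_i(S) is bounded for every bounded S ⊆ H; (iv) λ_{i,k}(x) ≥ λ > 0 for all x, k and i ∈ I_k(x) ∩ I_+(x), with Σ_{i ∈ I_k(x)} λ_{i,k}(x) = 1; (v) the control sequence {I_k} (with sup_{x,k} #(I_k(x))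 < ∞) is well matched with C. Then the sequence {x_k} is bounded and x_k ∈ C ∩ Q for some k. -/
open scoped RealInnerProductSpace Classical
open Filter Finset Topology

/-!
Fix the Slater point `z`, so `fᵢ(z) ≤ -δ < 0`. Tested at `z`, the subgradient inequality gives
`fᵢ(u) + δ ≤ ⟪gᵢ(u), u - z⟫`, and with Jensen's inequality for `‖·‖²` this turns every step into
the estimate `‖x_{k+1} - z‖² ≤ ‖x_k - z‖² - 2 α (δ - r) S_k`, where `S_k ≥ 0` is the averaged step
length. Once `r_[k] ≤ δ / 2` the distance to `z` no longer increases, and before that it grows by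
a bounded factor at each of finitely many moves: the iterates are bounded. Then the subgradients
along the iterates are bounded by some `G`, so each later move decreases `‖x_k - z‖²` by at least
`δ λ α_[k] r_[k] / G²`. If no iterate were feasible, well-matchedness would force infinitely many
moves, and the divergence of `∑ α_k r_k` would drive `‖x_k - z‖²` below zero.
-/

theorem Real.exists_pos_forall_le_neg_of_iSup_neg {ι : Type*} {a : ι → ℝ} (h : ⨆ i, a i < 0) :
    ∃ δ > 0, ∀ i, a i ≤ -δ := by
  -- an unbounded supremum would be the junk value `0`
  have hbdd : BddAbove (Set.range a) :=
    not_not.1 fun hb => h.ne (Real.iSup_of_not_bddAbove hb)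
  exact ⟨-⨆ i, a i, by linarith, fun i => by linarith [le_ciSup hbdd i]⟩

section Projection

variable {H : Type*} [NormedAddCommGroup H] [InnerProductSpace ℝ H] {Q : Set H} {u v p q : H}

theorem inner_sub_le_zero_of_isMinOn (hQ : Convex ℝ Q) (hp : p ∈ Q)
    (hmin : IsMinOn (‖· - u‖) Q p) (hq : q ∈ Q) : ⟪u - p, q - p⟫ ≤ 0 := by
  have : Nonempty Q := ⟨⟨p, hp⟩⟩
  refine (norm_eq_iInf_iff_real_inner_le_zero hQ hp).1 (le_antisymm ?_ ?_) q hq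
  · exact le_ciInf fun w => by
      simpa only [norm_sub_rev u] using isMinOn_iff.1 hmin w w.2
  · exact ciInf_le ⟨0, by rintro _ ⟨w, rfl⟩; positivity⟩ (⟨p, hp⟩ : Q)

theorem norm_sub_le_of_isMinOn (hQ : Convex ℝ Q) (hp : p ∈ Q)
    (hmin : IsMinOn (‖· - u‖) Q p) (hq : q ∈ Q) : ‖p - q‖ ≤ ‖u - q‖ := by
  have hvi := inner_sub_le_zero_of_isMinOn hQ hp hmin hq
  refine le_of_pow_le_pow_left₀ two_ne_zero (norm_nonneg _) ?_
  have hexp : ‖u - q‖ ^ 2 = ‖u - p‖ ^ 2 - 2 * ⟪u - p, q - p⟫ + ‖p - q‖ ^ 2 := by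
    rw [← norm_sub_rev q p, ← norm_sub_sq_real, sub_sub_sub_cancel_right]
  nlinarith [sq_nonneg ‖u - p‖]

theorem inner_le_zero_of_isMinOn_sub (hQ : Convex ℝ Q) (hu : u ∈ Q)
    (hmin : IsMinOn (‖· - (u - v)‖) Q u) (hq : q ∈ Q) : ⟪v, u - q⟫ ≤ 0 := by
  have := inner_sub_le_zero_of_isMinOn hQ hu hmin hq
  rwa [sub_sub_cancel_left, inner_neg_left, ← inner_neg_right, neg_sub] at this

end Projection

section StepLength

variable {H : Type*} [NormedAddCommGroup H]

/-- In the paper's notation `ρ = r_[k]`, `a = fᵢ(u)` and `γ = gᵢ(u)`; when `γ = 0` the division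
returns the junk value `0`. -/
noncomputable def stepCoeff (ρ a : ℝ) (γ : H) : ℝ :=
  if 0 < a then (ρ + a) / ‖γ‖ ^ 2 else 0

variable {ρ a δ G : ℝ} {γ w : H}

theorem stepCoeff_of_nonpos (ha : a ≤ 0) : stepCoeff ρ a γ = 0 := by
  simp [stepCoeff, not_lt.2 ha]

theorem stepCoeff_nonneg (hρ : 0 ≤ ρ) : 0 ≤ stepCoeff ρ a γ := by
  unfold stepCoeff
  split_ifs with ha
  · exact div_nonneg (by linarith) (by positivity)
  · rfl

theorem div_sq_le_stepCoeff (hρ : 0 ≤ ρ) (ha : 0 < a) (hγ : γ ≠ 0) (hG : ‖γ‖ ≤ G) :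
    ρ / G ^ 2 ≤ stepCoeff ρ a γ := by
  rw [stepCoeff, if_pos ha]
  have := norm_pos_iff.2 hγ
  exact div_le_div₀ (by linarith) (by linarith) (by positivity) (by gcongr)

theorem stepCoeff_pos (hρ : 0 ≤ ρ) (ha : 0 < a) (hγ : γ ≠ 0) : 0 < stepCoeff ρ a γ := by
  rw [stepCoeff, if_pos ha]
  exact div_pos (by linarith) (by positivity)

variable [InnerProductSpace ℝ H]

theorem norm_stepCoeff_smul_sq : ‖stepCoeff ρ a γ • γ‖ ^ 2 = stepCoeff ρ a γ * (ρ + a) := by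
  unfold stepCoeff
  split_ifs with ha
  · rcases eq_or_ne γ 0 with rfl | hγ
    · simp
    · have := norm_pos_iff.2 hγ
      rw [norm_smul, mul_pow, Real.norm_eq_abs, sq_abs]
      field_simp
  · simp

theorem add_le_inner_sub_of_subgradient {φ : H → ℝ} {u z : H} (hγ : ∀ y, φ u + ⟪γ, y - u⟫ ≤ φ y)
    (hz : φ z ≤ -δ) : φ u + δ ≤ ⟪γ, u - z⟫ := by
  have := hγ z
  rw [← neg_sub, inner_neg_right] at this
  linarith

theorem ne_zero_of_add_le_inner (hδ : 0 ≤ δ) (ha : 0 < a) (h : a + δ ≤ ⟪γ, w⟫) : γ ≠ 0 := by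
  rintro rfl
  simp only [inner_zero_left] at h
  linarith

theorem mul_add_le_inner_stepCoeff_smul (hρ : 0 ≤ ρ) (h : a + δ ≤ ⟪γ, w⟫) :
    stepCoeff ρ a γ * (a + δ) ≤ ⟪stepCoeff ρ a γ • γ, w⟫ := by
  rw [real_inner_smul_left]
  exact mul_le_mul_of_nonneg_left h (stepCoeff_nonneg hρ)

theorem inner_stepCoeff_smul_pos (hδ : 0 ≤ δ) (hρ : 0 ≤ ρ) (ha : 0 < a) (h : a + δ ≤ ⟪γ, w⟫) :
    0 < ⟪stepCoeff ρ a γ • γ, w⟫ :=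
  (mul_pos (stepCoeff_pos hρ ha (ne_zero_of_add_le_inner hδ ha h)) (by linarith)).trans_le
    (mul_add_le_inner_stepCoeff_smul hρ h)

theorem inner_stepCoeff_smul_nonneg (hδ : 0 ≤ δ) (hρ : 0 ≤ ρ) (h : a + δ ≤ ⟪γ, w⟫) :
    0 ≤ ⟪stepCoeff ρ a γ • γ, w⟫ := by
  rcases le_or_gt a 0 with ha | ha
  · simp [stepCoeff_of_nonpos ha]
  · exact (inner_stepCoeff_smul_pos hδ hρ ha h).le

theorem norm_sq_sub_inner_stepCoeff_smul_le (hρ : 0 ≤ ρ) (h : a + δ ≤ ⟪γ, w⟫) :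
    ‖stepCoeff ρ a γ • γ‖ ^ 2 - ⟪stepCoeff ρ a γ • γ, w⟫ ≤ (ρ - δ) * stepCoeff ρ a γ := by
  linarith [norm_stepCoeff_smul_sq (ρ := ρ) (a := a) (γ := γ),
    mul_add_le_inner_stepCoeff_smul hρ h]

theorem norm_stepCoeff_smul_le (hδ : 0 < δ) (hρ : 0 ≤ ρ) (h : a + δ ≤ ⟪γ, w⟫) :
    ‖stepCoeff ρ a γ • γ‖ ≤ (1 + ρ / δ) * ‖w‖ := by
  unfold stepCoeff
  split_ifs with ha
  · have hγ := norm_pos_iff.2 (ne_zero_of_add_le_inner hδ.le ha h)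
    have hcs : a + δ ≤ ‖γ‖ * ‖w‖ := h.trans (real_inner_le_norm γ w)
    rw [norm_smul, Real.norm_eq_abs, abs_of_nonneg (by positivity), div_mul_eq_mul_div,
      sq, mul_div_mul_right _ _ hγ.ne', div_le_iff₀ hγ]
    have : ρ + a ≤ (1 + ρ / δ) * (a + δ) := by
      have hexp : (1 + ρ / δ) * (a + δ) = ρ + a + (δ + ρ * a / δ) := by
        field_simp
        ring
      have : 0 ≤ ρ * a / δ := by positivity
      linarith
    nlinarith [this, mul_le_mul_of_nonneg_left hcs (by positivity : (0 : ℝ) ≤ 1 + ρ / δ)]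
  · simp only [zero_smul, norm_zero]
    positivity

end StepLength

section Averaging

variable {H : Type*} [NormedAddCommGroup H] [InnerProductSpace ℝ H] {ι : Type*} {s : Finset ι}
  {lam : ι → ℝ} {t : ℝ}

theorem norm_sub_smul_sum_sq_le (h0 : ∀ i ∈ s, 0 ≤ lam i) (h1 : ∑ i ∈ s, lam i = 1) (v : ι → H)
    (w : H) (ht0 : 0 ≤ t) (ht2 : t ≤ 2) :
    ‖w - t • ∑ i ∈ s, lam i • v i‖ ^ 2
      ≤ ‖w‖ ^ 2 + 2 * t * ∑ i ∈ s, lam i * (‖v i‖ ^ 2 - ⟪v i, w⟫) := by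
  set d := ∑ i ∈ s, lam i • v i
  have hjensen : ‖d‖ ^ 2 ≤ ∑ i ∈ s, lam i * ‖v i‖ ^ 2 := by
    simpa using (convexOn_univ_norm.pow (fun x _ => norm_nonneg x) 2).map_sum_le h0 h1
      (fun i _ => Set.mem_univ (v i))
  have hinner : ∑ i ∈ s, lam i * (‖v i‖ ^ 2 - ⟪v i, w⟫)
      = ∑ i ∈ s, lam i * ‖v i‖ ^ 2 - ⟪w, d⟫ := by
    simp only [d, inner_sum, real_inner_smul_right, real_inner_comm w, mul_sub, sum_sub_distrib]
  rw [norm_sub_sq_real, norm_smul, real_inner_smul_right, hinner, mul_pow, Real.norm_eq_abs,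
    sq_abs]
  nlinarith [mul_le_mul_of_nonneg_right (by nlinarith : t ^ 2 ≤ 2 * t) (sq_nonneg ‖d‖),
    mul_le_mul_of_nonneg_left hjensen (by positivity : (0 : ℝ) ≤ 2 * t)]

theorem norm_sub_smul_sum_le (h0 : ∀ i ∈ s, 0 ≤ lam i) (h1 : ∑ i ∈ s, lam i = 1) {v : ι → H}
    {L : ℝ} (hv : ∀ i ∈ s, ‖v i‖ ≤ L) (w : H) (ht0 : 0 ≤ t) :
    ‖w - t • ∑ i ∈ s, lam i • v i‖ ≤ ‖w‖ + t * L := by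
  have hsum : ‖∑ i ∈ s, lam i • v i‖ ≤ L :=
    calc ‖∑ i ∈ s, lam i • v i‖ ≤ ∑ i ∈ s, lam i * ‖v i‖ := by
          simpa using convexOn_univ_norm.map_sum_le h0 h1 (fun i _ => Set.mem_univ (v i))
      _ ≤ ∑ i ∈ s, lam i * L := sum_le_sum fun i hi => mul_le_mul_of_nonneg_left (hv i hi) (h0 i hi)
      _ = L := by rw [← sum_mul, h1, one_mul]
  calc ‖w - t • ∑ i ∈ s, lam i • v i‖ ≤ ‖w‖ + ‖t • ∑ i ∈ s, lam i • v i‖ := norm_sub_le _ _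
    _ = ‖w‖ + t * ‖∑ i ∈ s, lam i • v i‖ := by rw [norm_smul, Real.norm_of_nonneg ht0]
    _ ≤ ‖w‖ + t * L := by gcongr

end Averaging

section SubgradientStep

variable {H : Type*} [NormedAddCommGroup H] [InnerProductSpace ℝ H] {I : Type*}

/-- With `T = I_k(u)`: constraints with `fᵢ(u) ≤ 0` contribute nothing, which realizes the sum over
`I_k(u) ∩ I_+(u)`. -/
noncomputable def subgradDir (f : I → H → ℝ) (g : I → H → H) (T : Finset I) (lam : I → ℝ)
    (ρ : ℝ) (u : H) : H :=
  ∑ i ∈ T, lam i • stepCoeff ρ (f i u) (g i u) • g i u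

variable {f : I → H → ℝ} {g : I → H → H} {T : Finset I} {lam : I → ℝ} {ρ δ t : ℝ} {Q : Set H}
  {u z p : H}

theorem sum_ite_smul_eq_subgradDir :
    ∑ i ∈ T, (if 0 < f i u then lam i * ((ρ + f i u) / ‖g i u‖ ^ 2) else 0) • g i u
      = subgradDir f g T lam ρ u := by
  refine sum_congr rfl fun i _ => ?_
  unfold stepCoeff
  split_ifs <;> simp [smul_smul]

theorem norm_sub_smul_subgradDir_sub_sq_le (hkey : ∀ i, f i u + δ ≤ ⟪g i u, u - z⟫)
    (hρ : 0 ≤ ρ) (h0 : ∀ i ∈ T, 0 ≤ lam i) (h1 : ∑ i ∈ T, lam i = 1) (ht0 : 0 ≤ t)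
    (ht2 : t ≤ 2) :
    ‖u - t • subgradDir f g T lam ρ u - z‖ ^ 2
      ≤ ‖u - z‖ ^ 2 + 2 * t * (ρ - δ) * ∑ i ∈ T, lam i * stepCoeff ρ (f i u) (g i u) := by
  rw [subgradDir, sub_right_comm, mul_assoc, mul_sum]
  refine (norm_sub_smul_sum_sq_le h0 h1 (fun i => stepCoeff ρ (f i u) (g i u) • g i u) (u - z)
    ht0 ht2).trans (add_le_add_right (mul_le_mul_of_nonneg_left (sum_le_sum fun i hi => ?_)
      (by positivity : (0 : ℝ) ≤ 2 * t)) _)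
  rw [mul_left_comm (ρ - δ)]
  exact mul_le_mul_of_nonneg_left (norm_sq_sub_inner_stepCoeff_smul_le hρ (hkey i)) (h0 i hi)

theorem norm_sub_smul_subgradDir_sub_le (hδ : 0 < δ) (hkey : ∀ i, f i u + δ ≤ ⟪g i u, u - z⟫)
    (hρ : 0 ≤ ρ) (h0 : ∀ i ∈ T, 0 ≤ lam i) (h1 : ∑ i ∈ T, lam i = 1) (ht0 : 0 ≤ t)
    (ht2 : t ≤ 2) :
    ‖u - t • subgradDir f g T lam ρ u - z‖ ≤ (3 + 2 * ρ / δ) * ‖u - z‖ := by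
  rw [sub_right_comm]
  refine (norm_sub_smul_sum_le h0 h1 (fun i _ => norm_stepCoeff_smul_le hδ hρ (hkey i)) _
    ht0).trans ?_
  have := mul_le_mul_of_nonneg_right ht2 (by positivity : 0 ≤ (1 + ρ / δ) * ‖u - z‖)
  have hexp : (3 + 2 * ρ / δ) * ‖u - z‖ = ‖u - z‖ + 2 * ((1 + ρ / δ) * ‖u - z‖) := by ring
  linarith

theorem norm_sub_smul_subgradDir_sub_le_norm (hρδ : ρ ≤ δ)
    (hkey : ∀ i, f i u + δ ≤ ⟪g i u, u - z⟫) (hρ : 0 ≤ ρ) (h0 : ∀ i ∈ T, 0 ≤ lam i)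
    (h1 : ∑ i ∈ T, lam i = 1) (ht0 : 0 ≤ t) (ht2 : t ≤ 2) :
    ‖u - t • subgradDir f g T lam ρ u - z‖ ≤ ‖u - z‖ := by
  refine le_of_pow_le_pow_left₀ two_ne_zero (norm_nonneg _) ?_
  have hS : 0 ≤ ∑ i ∈ T, lam i * stepCoeff ρ (f i u) (g i u) :=
    sum_nonneg fun i hi => mul_nonneg (h0 i hi) (stepCoeff_nonneg hρ)
  have := norm_sub_smul_subgradDir_sub_sq_le hkey hρ h0 h1 ht0 ht2
  have : 2 * t * (ρ - δ) * ∑ i ∈ T, lam i * stepCoeff ρ (f i u) (g i u) ≤ 0 :=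
    mul_nonpos_of_nonpos_of_nonneg (mul_nonpos_of_nonneg_of_nonpos (by positivity)
      (by linarith)) hS
  linarith

theorem norm_sub_smul_subgradDir_sub_sq_add_le (hδ : 0 ≤ δ) (hρδ : ρ ≤ δ / 2)
    (hkey : ∀ i, f i u + δ ≤ ⟪g i u, u - z⟫) (hρ : 0 ≤ ρ) (h0 : ∀ i ∈ T, 0 ≤ lam i)
    (h1 : ∑ i ∈ T, lam i = 1) (ht0 : 0 ≤ t) (ht2 : t ≤ 2) {i : I} (hi : i ∈ T) (hfi : 0 < f i u)
    {lam₀ G : ℝ} (hlami : lam₀ ≤ lam i) (hG : ‖g i u‖ ≤ G) :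
    ‖u - t • subgradDir f g T lam ρ u - z‖ ^ 2 + δ * lam₀ / G ^ 2 * (t * ρ) ≤ ‖u - z‖ ^ 2 := by
  set S := ∑ j ∈ T, lam j * stepCoeff ρ (f j u) (g j u)
  have hS0 : 0 ≤ S := sum_nonneg fun j hj => mul_nonneg (h0 j hj) (stepCoeff_nonneg hρ)
  have hS : lam₀ * (ρ / G ^ 2) ≤ S :=
    (mul_le_mul hlami (div_sq_le_stepCoeff hρ hfi (ne_zero_of_add_le_inner hδ hfi (hkey i)) hG)
      (by positivity) (h0 i hi)).trans
      (single_le_sum (f := fun j => lam j * stepCoeff ρ (f j u) (g j u))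
        (fun j hj => mul_nonneg (h0 j hj) (stepCoeff_nonneg hρ)) hi)
  have := norm_sub_smul_subgradDir_sub_sq_le hkey hρ h0 h1 ht0 ht2
  have h2 : 2 * t * (ρ - δ) * S ≤ -(t * δ) * S := mul_le_mul_of_nonneg_right (by nlinarith) hS0
  have h3 : t * δ * (lam₀ * (ρ / G ^ 2)) ≤ t * δ * S :=
    mul_le_mul_of_nonneg_left hS (by positivity)
  have hexp : δ * lam₀ / G ^ 2 * (t * ρ) = t * δ * (lam₀ * (ρ / G ^ 2)) := by ring
  linarith

theorem ne_iff_exists_pos_of_isMinOn_subgradDir (hQ : Convex ℝ Q) (hu : u ∈ Q) (hz : z ∈ Q)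
    (hmin : IsMinOn (‖· - (u - t • subgradDir f g T lam ρ u)‖) Q p)
    (hkey : ∀ i, f i u + δ ≤ ⟪g i u, u - z⟫) (hδ : 0 ≤ δ) (hρ : 0 ≤ ρ)
    (h0 : ∀ i ∈ T, 0 ≤ lam i) (hpos : ∀ i ∈ T, 0 < f i u → 0 < lam i) (ht : 0 < t) :
    p ≠ u ↔ ∃ i ∈ T, 0 < f i u := by
  constructor
  · intro hpu
    by_contra! hT
    have hd : subgradDir f g T lam ρ u = 0 :=
      sum_eq_zero fun i hi => by rw [stepCoeff_of_nonpos (hT i hi), zero_smul, smul_zero]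
    rw [hd, smul_zero, sub_zero] at hmin
    exact hpu (by simpa [sub_eq_zero] using isMinOn_iff.1 hmin u hu)
  · rintro ⟨i, hi, hfi⟩ rfl
    have hd : 0 < ⟪subgradDir f g T lam ρ p, p - z⟫ := by
      rw [subgradDir, sum_inner]
      refine sum_pos' (fun j hj => ?_) ⟨i, hi, ?_⟩ <;> rw [real_inner_smul_left]
      · exact mul_nonneg (h0 j hj) (inner_stepCoeff_smul_nonneg hδ hρ (hkey j))
      · exact mul_pos (hpos i hi hfi) (inner_stepCoeff_smul_pos hδ hρ hfi (hkey i))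
    have := inner_le_zero_of_isMinOn_sub hQ hu hmin hz
    rw [real_inner_smul_left] at this
    exact (mul_pos ht hd).not_ge this

end SubgradientStep

theorem Nat.tendsto_count_atTop {p : ℕ → Prop} [DecidablePred p] (hp : {n | p n}.Infinite) :
    Tendsto (Nat.count p) atTop atTop :=
  tendsto_atTop_atTop_of_monotone (Nat.count_monotone p) fun n =>
    ⟨Nat.nth p n, (Nat.count_nth_of_infinite hp n).ge⟩

theorem infinite_setOf_ne_succ {α : Type*} {x : ℕ → α} {A : ℕ → α → Prop}
    (hA : ∀ k, {n | A n (x k)}.Infinite) (hmove : ∀ k, A k (x k) → x (k + 1) ≠ x k) :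
    {k | x k ≠ x (k + 1)}.Infinite := by
  intro hfin
  obtain ⟨K, hK⟩ := hfin.bddAbove
  have hstay : ∀ k, K < k → x (k + 1) = x k := fun k hk =>
    (not_not.1 fun hne => hk.not_ge (hK hne)).symm
  have hconst : ∀ k, K < k → x k = x (K + 1) := fun k hk => by
    induction k, Nat.succ_le_of_lt hk using Nat.le_induction with
    | base => rfl
    | succ k hk' ih => rw [hstay k (by omega), ih (by omega)]
  obtain ⟨n, hn, hKn⟩ := (hA (K + 1)).exists_gt K
  exact hmove n (hconst n hKn ▸ hn) (hstay n hKn)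

section Moves

variable {E : Type*} [SeminormedAddCommGroup E] {x : ℕ → E} {z : E}

theorem isBounded_range_of_norm_sub_le {K : ℝ} (hK : 1 ≤ K) (N : ℕ)
    (hgrow : ∀ k, ‖x (k + 1) - z‖ ≤ K * ‖x k - z‖)
    (hdec : ∀ k, N ≤ Nat.count (fun n => x n ≠ x (n + 1)) k → ‖x (k + 1) - z‖ ≤ ‖x k - z‖) :
    Bornology.IsBounded (Set.range x) := by
  set c := Nat.count (fun n => x n ≠ x (n + 1))
  have hpow : ∀ k, ‖x k - z‖ ≤ K ^ min (c k) N * ‖x 0 - z‖ := by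
    intro k
    induction k with
    | zero => simp [c]
    | succ k ih =>
      by_cases hmove : x k = x (k + 1)
      · rwa [← hmove, show c (k + 1) = c k by simp [c, Nat.count_succ, hmove]]
      have hc : c (k + 1) = c k + 1 := by simp [c, Nat.count_succ, hmove]
      rcases le_or_gt N (c k) with hN | hN
      · rw [hc, min_eq_right (by omega)]
        rw [min_eq_right hN] at ih
        exact (hdec k hN).trans ih
      · rw [hc, min_eq_left (by omega), pow_succ', mul_assoc]
        rw [min_eq_left hN.le] at ih
        exact (hgrow k).trans (mul_le_mul_of_nonneg_left ih (by linarith))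
  refine (Metric.isBounded_closedBall (x := z) (r := K ^ N * ‖x 0 - z‖)).subset ?_
  rintro _ ⟨k, rfl⟩
  rw [Metric.mem_closedBall, dist_eq_norm]
  exact (hpow k).trans (mul_le_mul_of_nonneg_right (pow_le_pow_right₀ hK (min_le_right _ _))
    (norm_nonneg _))

theorem finite_setOf_ne_succ_of_sq_decrease {β : ℕ → ℝ}
    (hβ : Tendsto (fun n => ∑ k ∈ range n, β k) atTop atTop) (N : ℕ)
    (hdec : ∀ k, N ≤ Nat.count (fun n => x n ≠ x (n + 1)) k → x k ≠ x (k + 1) →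
      ‖x (k + 1) - z‖ ^ 2 + β (Nat.count (fun n => x n ≠ x (n + 1)) k) ≤ ‖x k - z‖ ^ 2) :
    {k | x k ≠ x (k + 1)}.Finite := by
  by_contra hinf
  set c := Nat.count (fun n => x n ≠ x (n + 1))
  have hc : Tendsto c atTop atTop := Nat.tendsto_count_atTop hinf
  set V := fun k => ‖x k - z‖ ^ 2 + ∑ n ∈ range (c k), β n
  have hV : ∀ k, N ≤ c k → V (k + 1) ≤ V k := by
    intro k hk
    by_cases hmove : x k = x (k + 1)
    · simp only [V, ← hmove, show c (k + 1) = c k by simp [c, Nat.count_succ, hmove], le_refl]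
    · have hc1 : c (k + 1) = c k + 1 := by simp [c, Nat.count_succ, hmove]
      simp only [V, hc1, sum_range_succ]
      linarith [hdec k hk hmove]
  obtain ⟨k₀, hk₀⟩ := eventually_atTop.1 (hc.eventually_ge_atTop N)
  have hVk₀ : ∀ k ≥ k₀, V k ≤ V k₀ := by
    intro k hk
    induction k, hk using Nat.le_induction with
    | base => exact le_rfl
    | succ k hk ih => exact (hV k (hk₀ k hk)).trans ih
  obtain ⟨k, hbig, hk⟩ :=
    (((hβ.comp hc).eventually_gt_atTop (V k₀)).and (eventually_ge_atTop k₀)).exists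
  have := hVk₀ k hk
  simp only [V, Function.comp] at this hbig
  linarith [sq_nonneg ‖x k - z‖]

end Moves

section Iteration

variable {H : Type*} [NormedAddCommGroup H] [InnerProductSpace ℝ H] {I : Type*}
  {f : I → H → ℝ} {g : I → H → H} {x : ℕ → H} {z : H} {δ : ℝ} {T : ℕ → Finset I}
  {lam : ℕ → I → ℝ} {α r : ℕ → ℝ}

theorem isBounded_range_of_subgradDir_step (hδ : 0 < δ) (hr0 : Tendsto r atTop (𝓝 0))
    (hr : ∀ n, 0 < r n) (hα : ∀ n, 0 < α n ∧ α n ≤ 2)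
    (hkey : ∀ k i, f i (x k) + δ ≤ ⟪g i (x k), x k - z⟫) (h0 : ∀ k, ∀ i ∈ T k, 0 ≤ lam k i)
    (h1 : ∀ k, ∑ i ∈ T k, lam k i = 1)
    (hstep : ∀ k, ‖x (k + 1) - z‖ ≤ ‖x k - α (Nat.count (fun n => x n ≠ x (n + 1)) k) •
      subgradDir f g (T k) (lam k) (r (Nat.count (fun n => x n ≠ x (n + 1)) k)) (x k) - z‖) :
    Bornology.IsBounded (Set.range x) := by
  set c := Nat.count (fun n => x n ≠ x (n + 1))
  obtain ⟨R, hR⟩ := hr0.bddAbove_range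
  obtain ⟨N, hN⟩ := eventually_atTop.1 (hr0.eventually (ge_mem_nhds hδ))
  have hK : 1 ≤ 3 + 2 * R / δ := by
    have := (hr 0).trans_le (hR ⟨0, rfl⟩)
    have : 0 ≤ 2 * R / δ := by positivity
    linarith
  refine isBounded_range_of_norm_sub_le hK N (fun k => (hstep k).trans ?_)
    fun k hk => (hstep k).trans (norm_sub_smul_subgradDir_sub_le_norm (hN _ hk) (hkey k)
      (hr (c k)).le (h0 k) (h1 k) (hα (c k)).1.le (hα (c k)).2)
  refine (norm_sub_smul_subgradDir_sub_le hδ (hkey k) (hr (c k)).le (h0 k) (h1 k)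
    (hα (c k)).1.le (hα (c k)).2).trans (mul_le_mul_of_nonneg_right ?_ (norm_nonneg _))
  gcongr
  exact hR ⟨_, rfl⟩

theorem finite_setOf_ne_succ_of_subgradDir_step (hδ : 0 < δ) (hr0 : Tendsto r atTop (𝓝 0))
    (hdiv : Tendsto (fun n => ∑ k ∈ range n, α k * r k) atTop atTop) (hr : ∀ n, 0 < r n)
    (hα : ∀ n, 0 < α n ∧ α n ≤ 2)
    (hkey : ∀ k i, f i (x k) + δ ≤ ⟪g i (x k), x k - z⟫) (h0 : ∀ k, ∀ i ∈ T k, 0 ≤ lam k i)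
    (h1 : ∀ k, ∑ i ∈ T k, lam k i = 1)
    (hstep : ∀ k, ‖x (k + 1) - z‖ ≤ ‖x k - α (Nat.count (fun n => x n ≠ x (n + 1)) k) •
      subgradDir f g (T k) (lam k) (r (Nat.count (fun n => x n ≠ x (n + 1)) k)) (x k) - z‖)
    (hmove : ∀ k, x (k + 1) ≠ x k → ∃ i ∈ T k, 0 < f i (x k)) {lam₀ G : ℝ} (hlam₀ : 0 < lam₀)
    (hlam : ∀ k, ∀ i ∈ T k, 0 < f i (x k) → lam₀ ≤ lam k i) (hG₀ : 0 < G)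
    (hG : ∀ k i, ‖g i (x k)‖ ≤ G) :
    {k | x k ≠ x (k + 1)}.Finite := by
  set c := Nat.count (fun n => x n ≠ x (n + 1))
  obtain ⟨N, hN⟩ := eventually_atTop.1 (hr0.eventually (ge_mem_nhds (half_pos hδ)))
  refine finite_setOf_ne_succ_of_sq_decrease (z := z) (β := fun n => δ * lam₀ / G ^ 2 * (α n * r n))
    (by simpa only [← mul_sum] using hdiv.const_mul_atTop (by positivity)) N fun k hk hne => ?_
  obtain ⟨i, hi, hfi⟩ := hmove k hne.symm
  have := norm_sub_smul_subgradDir_sub_sq_add_le hδ.le (hN _ hk) (hkey k) (hr (c k)).le (h0 k)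
    (h1 k) (hα (c k)).1.le (hα (c k)).2 hi hfi (hlam k i hi hfi) (hG k i)
  nlinarith [hstep k, norm_nonneg (x (k + 1) - z)]

end Iteration

theorem stmt13_general {H : Type*} [NormedAddCommGroup H] [InnerProductSpace ℝ H]
    {I : Type*}
    (f : I → H → ℝ)
    -- a selection of the subdifferential
    (g : I → H → H) (hg : ∀ i (u y : H), f i u + ⟪g i u, y - u⟫ ≤ f i y)
    (Q : Set H) (hQconvex : Convex ℝ Q)
    (PQ : H → H) (hPQmem : ∀ u, PQ u ∈ Q)
    (hPQmin : ∀ u, ∀ w ∈ Q, ‖PQ u - u‖ ≤ ‖w - u‖)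
    -- the control sequence
    (Ik : ℕ → H → Finset I)
    -- the weights
    (lam : I → ℕ → H → ℝ) (hlam01 : ∀ i k u, 0 ≤ lam i k u ∧ lam i k u ≤ 1)
    (hlamsum : ∀ k u, ∑ i ∈ Ik k u, lam i k u = 1)
    -- relaxations and overrelaxations
    (α : ℕ → ℝ) (hα : ∀ k, 0 < α k ∧ α k ≤ 2)
    (r : ℕ → ℝ) (hrpos : ∀ k, 0 < r k)
    -- the iterates and the correction-step counter
    (x : ℕ → H) (cnt : ℕ → ℕ)
    (hcnt : ∀ k, cnt k = ((Finset.range k).filter (fun n => x n ≠ x (n + 1))).card)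
    (hx0 : x 0 ∈ Q)
    (hxrec : ∀ k, x (k + 1) = PQ (x k - α (cnt k) •
      ∑ i ∈ Ik k (x k),
        (if 0 < f i (x k) then
          lam i k (x k) * ((r (cnt k) + f i (x k)) / ‖g i (x k)‖ ^ 2)
        else 0) • g i (x k)))
    -- (i') Slater condition
    (z : H) (hzQ : z ∈ Q) (hslater : (⨆ i, f i z) < 0)
    -- (ii') overrelaxations tend to zero, the series diverges
    (hr0 : Filter.Tendsto r Filter.atTop (nhds 0))
    (hdiv : Filter.Tendsto (fun n => ∑ k ∈ Finset.range n, α k * r k)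
      Filter.atTop Filter.atTop)
    -- (iii') subdifferentials are uniformly bounded on bounded sets
    (hsubbd : ∀ S : Set H, Bornology.IsBounded S →
      Bornology.IsBounded {gv : H | ∃ i, ∃ u ∈ S, ∀ y, f i u + ⟪gv, y - u⟫ ≤ f i y})
    -- (iv) weights of violated constraints are bounded from below
    (lam0 : ℝ) (hlam0 : 0 < lam0)
    (hlamlb : ∀ i k u, i ∈ Ik k u → 0 < f i u → lam0 ≤ lam i k u)
    -- (v) the control sequence is well matched with C
    (hwm : ∀ u : H, u ∉ ⋂ i, {v | f i v ≤ 0} →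
      {k : ℕ | ∃ i ∈ Ik k u, 0 < f i u}.Infinite) :
    Bornology.IsBounded (Set.range x) ∧
      ∃ k, x k ∈ (⋂ i, {u | f i u ≤ 0}) ∩ Q := by
  obtain ⟨δ, hδ, hfz⟩ := Real.exists_pos_forall_le_neg_of_iSup_neg hslater
  have hkey : ∀ k i, f i (x k) + δ ≤ ⟪g i (x k), x k - z⟫ := fun k i =>
    add_le_inner_sub_of_subgradient (hg i (x k)) (hfz i)
  obtain rfl : cnt = Nat.count (fun n => x n ≠ x (n + 1)) :=
    funext fun k => by rw [hcnt, Nat.count_eq_card_filter_range]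
  have hxQ : ∀ k, x k ∈ Q := by
    rintro (_ | k)
    exacts [hx0, hxrec k ▸ hPQmem _]
  set c := Nat.count (fun n => x n ≠ x (n + 1))
  have hmin (k : ℕ) : IsMinOn (‖· - (x k - α (c k) •
      subgradDir f g (Ik k (x k)) (fun i => lam i k (x k)) (r (c k)) (x k))‖) Q (x (k + 1)) := by
    rw [hxrec k, sum_ite_smul_eq_subgradDir]
    exact isMinOn_iff.2 (hPQmin _)
  have hstep (k : ℕ) := norm_sub_le_of_isMinOn hQconvex (hxQ _) (hmin k) hzQ
  have h0 : ∀ k, ∀ i ∈ Ik k (x k), 0 ≤ lam i k (x k) := fun k i _ => (hlam01 i k (x k)).1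
  have hbdd := isBounded_range_of_subgradDir_step hδ hr0 hrpos hα hkey h0
    (fun k => hlamsum k _) hstep
  refine ⟨hbdd, ?_⟩
  by_contra! hout
  obtain ⟨G, hG₀, hG⟩ := (hsubbd _ hbdd).exists_pos_norm_le
  have hmove (k : ℕ) := ne_iff_exists_pos_of_isMinOn_subgradDir hQconvex (hxQ k) hzQ (hmin k)
    (hkey k) hδ.le (hrpos _).le (h0 k) (fun i hi hfi => hlam0.trans_le (hlamlb i k _ hi hfi))
    (hα _).1
  exact infinite_setOf_ne_succ (A := fun n u => ∃ i ∈ Ik n u, 0 < f i u)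
    (fun k => hwm _ fun hC => hout k ⟨hC, hxQ k⟩) (fun k => (hmove k).2)
    (finite_setOf_ne_succ_of_subgradDir_step hδ hr0 hdiv hrpos hα hkey h0 (fun k => hlamsum k _)
      hstep (fun k => (hmove k).1) hlam0 (fun k i => hlamlb i k _) hG₀
      fun k i => hG _ ⟨i, x k, ⟨k, rfl⟩, hg i (x k)⟩)

/-- Example 4.9 (subgradient projections): under the Slater condition (i'), divergent
overrelaxations (ii'), uniformly bounded subdifferentials (iii'), weights bounded below
(iv) and a well matched control (v), the subgradient projection method with the
correction-step counter `[k]` is bounded and reaches `C ∩ Q` in finitely many steps. -/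
theorem stmt13 {H : Type*} [NormedAddCommGroup H] [InnerProductSpace ℝ H] [CompleteSpace H]
    {I : Type*} [Countable I]
    (f : I → H → ℝ)
    (hconv : ∀ i, ConvexOn ℝ Set.univ (f i))
    (hlsc : ∀ i, LowerSemicontinuous (f i))
    -- a selection of the subdifferential
    (g : I → H → H) (hg : ∀ i (u y : H), f i u + ⟪g i u, y - u⟫ ≤ f i y)
    (Q : Set H) (hQne : Q.Nonempty) (hQclosed : IsClosed Q) (hQconvex : Convex ℝ Q)
    (PQ : H → H) (hPQmem : ∀ u, PQ u ∈ Q)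
    (hPQmin : ∀ u, ∀ w ∈ Q, ‖PQ u - u‖ ≤ ‖w - u‖)
    -- the control sequence
    (Ik : ℕ → H → Finset I) (hIkne : ∀ k u, (Ik k u).Nonempty)
    (M : ℕ) (hIkM : ∀ k u, (Ik k u).card ≤ M)
    -- the weights
    (lam : I → ℕ → H → ℝ) (hlam01 : ∀ i k u, 0 ≤ lam i k u ∧ lam i k u ≤ 1)
    (hlamsum : ∀ k u, ∑ i ∈ Ik k u, lam i k u = 1)
    -- relaxations and overrelaxations
    (α : ℕ → ℝ) (hα : ∀ k, 0 < α k ∧ α k ≤ 2)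
    (r : ℕ → ℝ) (hrpos : ∀ k, 0 < r k)
    -- the iterates and the correction-step counter
    (x : ℕ → H) (cnt : ℕ → ℕ)
    (hcnt0 : cnt 0 = 0)
    (hcnt : ∀ k, cnt k = ((Finset.range k).filter (fun n => x n ≠ x (n + 1))).card)
    (hx0 : x 0 ∈ Q)
    (hxrec : ∀ k, x (k + 1) = PQ (x k - α (cnt k) •
      ∑ i ∈ Ik k (x k),
        (if 0 < f i (x k) then
          lam i k (x k) * ((r (cnt k) + f i (x k)) / ‖g i (x k)‖ ^ 2)
        else 0) • g i (x k)))
    -- (i') Slater condition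
    (z : H) (hzQ : z ∈ Q) (hslater : (⨆ i, f i z) < 0)
    -- (ii') overrelaxations tend to zero, the series diverges
    (hr0 : Filter.Tendsto r Filter.atTop (nhds 0))
    (hdiv : Filter.Tendsto (fun n => ∑ k ∈ Finset.range n, α k * r k)
      Filter.atTop Filter.atTop)
    -- (iii') subdifferentials are uniformly bounded on bounded sets
    (hsubbd : ∀ S : Set H, Bornology.IsBounded S →
      Bornology.IsBounded {gv : H | ∃ i, ∃ u ∈ S, ∀ y, f i u + ⟪gv, y - u⟫ ≤ f i y})
    -- (iv) weights of violated constraints are bounded from below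
    (lam0 : ℝ) (hlam0 : 0 < lam0)
    (hlamlb : ∀ i k u, i ∈ Ik k u → 0 < f i u → lam0 ≤ lam i k u)
    -- (v) the control sequence is well matched with C
    (hwm : ∀ u : H, u ∉ ⋂ i, {v | f i v ≤ 0} →
      {k : ℕ | ∃ i ∈ Ik k u, 0 < f i u}.Infinite) :
    Bornology.IsBounded (Set.range x) ∧
      ∃ k, x k ∈ (⋂ i, {u | f i u ≤ 0}) ∩ Q :=
  stmt13_general f g hg Q hQconvex PQ hPQmem hPQmin Ik lam hlam01 hlamsum α hα r hrpos x cnt hcnt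
    hx0 hxrec z hzQ hslater hr0 hdiv hsubbd lam0 hlam0 hlamlb hwm
end

section
/- Let H be a real Hilbert space, let I be a countable index set, and for each i ∈ I let f_i : H → ℝ be convex and lower semicontinuous with subgradient selection g_i(x) ∈ ∂f_i(x). Let z ∈ H satisfy f(z) := sup_{i ∈ I} f_i(z) < 0, let α ∈ (0,2], let 0 < r ≤ −f(z), let x ∈ H, let J ⊆ {i ∈ I : f_i(x) > 0} be finite and nonempty, and let λ_i ∈ [0,1] with Σ_{i ∈ J} λ_i = 1. Then the point x⁺ := x − α Σ_{i ∈ J} λ_i ((f_i(x) + r)/‖g_i(x)‖²) g_i(x) satisfies ‖x⁺ − z‖ ≤ ‖x − z‖. -/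
open scoped RealInnerProductSpace

lemma sqnorm_convexOn {H : Type*} [NormedAddCommGroup H] [InnerProductSpace ℝ H] :
    ConvexOn ℝ Set.univ (fun y : H => ‖y‖ ^ 2) := by
  refine ⟨convex_univ, fun a _ b _ p q hp hq hpq => ?_⟩
  have htri : ‖p • a + q • b‖ ≤ p * ‖a‖ + q * ‖b‖ := by
    calc ‖p • a + q • b‖ ≤ ‖p • a‖ + ‖q • b‖ := norm_add_le _ _
      _ = p * ‖a‖ + q * ‖b‖ := by
          rw [norm_smul, norm_smul, Real.norm_eq_abs, Real.norm_eq_abs,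
            abs_of_nonneg hp, abs_of_nonneg hq]
  have h0 : (0:ℝ) ≤ ‖p • a + q • b‖ := norm_nonneg _
  simp only [smul_eq_mul]
  nlinarith [sq_nonneg (‖a‖ - ‖b‖), mul_nonneg hp hq, norm_nonneg a, norm_nonneg b]

/-- One-step Fejér monotonicity of the overrelaxed subgradient projection step with
respect to a Slater point `z`: if `0 < r ≤ −sup_i f_i(z)`, then
`‖x⁺ − z‖ ≤ ‖x − z‖`. -/
theorem stmt14 {H : Type*} [NormedAddCommGroup H] [InnerProductSpace ℝ H] [CompleteSpace H]
    {I : Type*} [Countable I]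
    (f : I → H → ℝ)
    (hconv : ∀ i, ConvexOn ℝ Set.univ (f i))
    (hlsc : ∀ i, LowerSemicontinuous (f i))
    (g : I → H → H) (hg : ∀ i (u y : H), f i u + ⟪g i u, y - u⟫ ≤ f i y)
    (z : H) (hz : (⨆ i, f i z) < 0)
    (α : ℝ) (hα : 0 < α ∧ α ≤ 2)
    (r : ℝ) (hr : 0 < r) (hrz : r ≤ -(⨆ i, f i z))
    (x : H) (J : Finset I) (hJne : J.Nonempty)
    (hJ : ∀ i ∈ J, 0 < f i x)
    (lam : I → ℝ) (hlam01 : ∀ i ∈ J, 0 ≤ lam i ∧ lam i ≤ 1)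
    (hsum : ∑ i ∈ J, lam i = 1) :
    ‖(x - α • ∑ i ∈ J, (lam i * ((f i x + r) / ‖g i x‖ ^ 2)) • g i x) - z‖ ≤
      ‖x - z‖ := by
  obtain ⟨hα0, hα2⟩ := hα
  -- boundedness of sup
  have hbdd : BddAbove (Set.range fun i => f i z) := by
    by_contra hb
    rw [Real.iSup_of_not_bddAbove hb] at hz
    exact lt_irrefl _ hz
  have hfz : ∀ i, f i z ≤ -r := fun i => (le_ciSup hbdd i).trans (by linarith)
  -- key inequality
  have hkey : ∀ i ∈ J, f i x + r ≤ ⟪g i x, x - z⟫ := by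
    intro i hi
    have h1 := hg i x z
    have h2 : ⟪g i x, z - x⟫ = -⟪g i x, x - z⟫ := by
      rw [← inner_neg_right]; congr 1; abel
    have := hfz i
    rw [h2] at h1
    linarith
  have hgne : ∀ i ∈ J, g i x ≠ 0 := by
    intro i hi h0
    have := hkey i hi
    rw [h0, inner_zero_left] at this
    have := hJ i hi
    linarith
  set d := ∑ i ∈ J, (lam i * ((f i x + r) / ‖g i x‖ ^ 2)) • g i x with hd
  set S := ∑ i ∈ J, lam i * ((f i x + r) ^ 2 / ‖g i x‖ ^ 2) with hS
  have hterm : ∀ i ∈ J, 0 ≤ lam i * ((f i x + r) ^ 2 / ‖g i x‖ ^ 2) := by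
    intro i hi
    exact mul_nonneg (hlam01 i hi).1 (div_nonneg (sq_nonneg _) (sq_nonneg _))
  have hSnn : 0 ≤ S := Finset.sum_nonneg hterm
  -- inner product lower bound
  have hdi : S ≤ ⟪d, x - z⟫ := by
    rw [hd, sum_inner, hS]
    apply Finset.sum_le_sum
    intro i hi
    rw [real_inner_smul_left]
    have hgpos : (0:ℝ) < ‖g i x‖ ^ 2 :=
      pow_pos (norm_pos_iff.mpr (hgne i hi)) 2
    have hfr : 0 < f i x + r := by have := hJ i hi; linarith
    have hc : 0 ≤ lam i * ((f i x + r) / ‖g i x‖ ^ 2) :=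
      mul_nonneg (hlam01 i hi).1 (div_nonneg hfr.le hgpos.le)
    have h1 : lam i * ((f i x + r) / ‖g i x‖ ^ 2) * (f i x + r) ≤
        lam i * ((f i x + r) / ‖g i x‖ ^ 2) * ⟪g i x, x - z⟫ :=
      mul_le_mul_of_nonneg_left (hkey i hi) hc
    have h2 : lam i * ((f i x + r) / ‖g i x‖ ^ 2) * (f i x + r)
        = lam i * ((f i x + r) ^ 2 / ‖g i x‖ ^ 2) := by
      field_simp
    linarith [h1, h2.ge]
  -- Jensen: ‖d‖² ≤ S
  have hnd : ‖d‖ ^ 2 ≤ S := by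
    have hjen := sqnorm_convexOn.map_sum_le (t := J) (w := lam)
      (p := fun i => ((f i x + r) / ‖g i x‖ ^ 2) • g i x)
      (fun i hi => (hlam01 i hi).1) hsum (fun i hi => Set.mem_univ _)
    have hEq1 : (∑ i ∈ J, lam i • (((f i x + r) / ‖g i x‖ ^ 2) • g i x)) = d := by
      rw [hd]
      apply Finset.sum_congr rfl
      intro i hi
      rw [smul_smul]
    have hEq2 : ∀ i ∈ J, lam i • ‖((f i x + r) / ‖g i x‖ ^ 2) • g i x‖ ^ 2
        = lam i * ((f i x + r) ^ 2 / ‖g i x‖ ^ 2) := by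
      intro i hi
      have hgpos : (0:ℝ) < ‖g i x‖ ^ 2 :=
        pow_pos (norm_pos_iff.mpr (hgne i hi)) 2
      have hfr : 0 < f i x + r := by have := hJ i hi; linarith
      rw [norm_smul, smul_eq_mul, mul_pow, Real.norm_eq_abs,
        abs_of_nonneg (div_nonneg hfr.le hgpos.le)]
      rw [div_pow]
      rw [show (‖g i x‖ ^ 2) ^ 2 = ‖g i x‖ ^ 2 * ‖g i x‖ ^ 2 by ring]
      field_simp
    calc ‖d‖ ^ 2 = ‖∑ i ∈ J, lam i • (((f i x + r) / ‖g i x‖ ^ 2) • g i x)‖ ^ 2 := by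
          rw [hEq1]
      _ ≤ ∑ i ∈ J, lam i • ‖((f i x + r) / ‖g i x‖ ^ 2) • g i x‖ ^ 2 := hjen
      _ = S := by rw [hS]; exact Finset.sum_congr rfl hEq2
  -- expand the square
  have hexp : ‖(x - α • d) - z‖ ^ 2
      = ‖x - z‖ ^ 2 - 2 * α * ⟪d, x - z⟫ + α ^ 2 * ‖d‖ ^ 2 := by
    have h1 : (x - α • d) - z = (x - z) - α • d := by abel
    rw [h1, norm_sub_sq_real, real_inner_smul_right, norm_smul, Real.norm_eq_abs,
      abs_of_nonneg hα0.le, mul_pow]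
    rw [real_inner_comm]
    ring
  have hsq : ‖(x - α • d) - z‖ ^ 2 ≤ ‖x - z‖ ^ 2 := by
    rw [hexp]
    have h1 : 2 * α * S ≤ 2 * α * ⟪d, x - z⟫ :=
      mul_le_mul_of_nonneg_left hdi (by linarith)
    have h2 : α ^ 2 * ‖d‖ ^ 2 ≤ α ^ 2 * S :=
      mul_le_mul_of_nonneg_left hnd (sq_nonneg _)
    nlinarith [mul_nonneg (mul_nonneg hα0.le (by linarith : (0:ℝ) ≤ 2 - α)) hSnn]
  nlinarith [norm_nonneg ((x - α • d) - z), norm_nonneg (x - z), hsq]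
end

section
/- Let (Ω, F, P) be a probability space, let I be a countable index set, and let {I_k}_{k=0}^∞ be independent and identically distributed set-valued random variables I_k : Ω → 2^I \ {∅} with sup_{ω,k} #(I_k(ω)) < ∞. Let I' ⊆ I be such that P({ω : i ∈ I_k(ω)}) > 0 for every i ∈ I'. Then P({ω ∈ Ω : I' ⊆ ⋃_{k=n}^∞ I_k(ω) for every n = 0,1,2,…}) = 1; that is, almost surely the realized control sequence is repetitive in I'. -/
/-!
For each `i ∈ I'` the events `{i ∈ I_k}` are independent, since each is measurable with respect
to the σ-algebra generated by the fibres of the countably-valued variable `I_k`, and by identical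
distribution they all have the same positive probability. Their probabilities therefore sum to
`∞`, and the second Borel–Cantelli lemma shows that almost surely `i ∈ I_k` for infinitely many
`k`. As `I'` is countable, almost surely this holds for all `i ∈ I'` at once.
-/

open MeasureTheory ProbabilityTheory Filter Set

section CountableCodomain

variable {Ω β : Type*} [Countable β] {g : Ω → β}

lemma measurableSet_preimage_of_countable {m : MeasurableSpace Ω}
    (hg : ∀ b, MeasurableSet[m] (g ⁻¹' {b})) (s : Set β) : MeasurableSet[m] (g ⁻¹' s) := by
  rw [← biUnion_preimage_singleton]
  exact .biUnion s.to_countable fun b _ => hg b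

lemma measure_preimage_eq_tsum [MeasurableSpace Ω] (μ : Measure Ω)
    (hg : ∀ b, MeasurableSet (g ⁻¹' {b})) (s : Set β) :
    μ (g ⁻¹' s) = ∑' b : s, μ (g ⁻¹' {(b : β)}) := by
  rw [← biUnion_preimage_singleton,
    measure_biUnion s.to_countable (pairwiseDisjoint_fiber g s) fun b _ => hg b]

end CountableCodomain

lemma isPiSystem_range_preimage_singleton {Ω β : Type*} (g : Ω → β) :
    IsPiSystem (range fun b => g ⁻¹' {b}) := by
  rintro _ ⟨b, rfl⟩ _ ⟨c, rfl⟩ ⟨ω, hb, hc⟩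
  obtain rfl : b = c := (mem_singleton_iff.1 hb).symm.trans hc
  exact ⟨b, (inter_self _).symm⟩

section Independence

variable {Ω ι β : Type*} [MeasurableSpace Ω] {μ : Measure Ω} [Nonempty β] {f : ι → Ω → β}
  (hmeas : ∀ i b, MeasurableSet (f i ⁻¹' {b}))
  (hindep : ∀ (S : Finset ι) (b : ι → β),
    μ (⋂ i ∈ S, f i ⁻¹' {b i}) = ∏ i ∈ S, μ (f i ⁻¹' {b i}))
include hmeas hindep

lemma iIndep_generateFrom_preimage_singleton :
    iIndep (fun i => MeasurableSpace.generateFrom (range fun b => f i ⁻¹' {b})) μ := by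
  refine iIndepSets.iIndep (fun i => MeasurableSpace.generateFrom_le ?_) _
    (fun i => isPiSystem_range_preimage_singleton (f i)) (fun _ => rfl) ?_
  · rintro _ ⟨b, rfl⟩
    exact hmeas i b
  refine (iIndepSets_iff _ μ).2 fun S s hs => ?_
  choose! b hb using hs
  calc μ (⋂ i ∈ S, s i) = μ (⋂ i ∈ S, f i ⁻¹' {b i}) :=
        congrArg μ (iInter₂_congr fun i hi => (hb i hi).symm)
    _ = ∏ i ∈ S, μ (f i ⁻¹' {b i}) := hindep S b
    _ = ∏ i ∈ S, μ (s i) := Finset.prod_congr rfl fun i hi => congrArg μ (hb i hi)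

lemma iIndepSet_preimage_of_countable [Countable β] (s : Set β) :
    iIndepSet (fun i => f i ⁻¹' s) μ := by
  refine iIndep_of_iIndep_of_le (iIndep_generateFrom_preimage_singleton hmeas hindep)
    fun i => MeasurableSpace.generateFrom_le ?_
  rintro _ rfl
  exact measurableSet_preimage_of_countable
    (fun b => MeasurableSpace.measurableSet_generateFrom (mem_range_self b)) s

end Independence

lemma ae_frequently_mem_of_iid {Ω β : Type*} [MeasurableSpace Ω] {μ : Measure Ω}
    [IsProbabilityMeasure μ] [Nonempty β] [Countable β] {f : ℕ → Ω → β}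
    (hmeas : ∀ k b, MeasurableSet (f k ⁻¹' {b}))
    (hident : ∀ k b, μ (f k ⁻¹' {b}) = μ (f 0 ⁻¹' {b}))
    (hindep : ∀ (S : Finset ℕ) (b : ℕ → β),
      μ (⋂ k ∈ S, f k ⁻¹' {b k}) = ∏ k ∈ S, μ (f k ⁻¹' {b k}))
    {s : Set β} (hs : 0 < μ (f 0 ⁻¹' s)) :
    ∀ᵐ ω ∂μ, ∃ᶠ k in atTop, f k ω ∈ s := by
  have hsm : ∀ k, MeasurableSet (f k ⁻¹' s) := fun k =>
    measurableSet_preimage_of_countable (hmeas k) s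
  have hconst : ∀ k, μ (f k ⁻¹' s) = μ (f 0 ⁻¹' s) := fun k => by
    rw [measure_preimage_eq_tsum μ (hmeas k), measure_preimage_eq_tsum μ (hmeas 0)]
    exact tsum_congr fun b => hident k b
  have hlimsup : μ (limsup (fun k => f k ⁻¹' s) atTop) = 1 := by
    refine measure_limsup_eq_one hsm (iIndepSet_preimage_of_countable hmeas hindep s) ?_
    simp only [hconst]
    exact ENNReal.tsum_const_eq_top_of_ne_zero hs.ne'
  have hae : ∀ᵐ ω ∂μ, ω ∈ limsup (fun k => f k ⁻¹' s) atTop :=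
    (ae_mem_iff_measure_eq (MeasurableSet.measurableSet_limsup hsm).nullMeasurableSet).2
      (hlimsup.trans measure_univ.symm)
  exact hae.mono fun ω => mem_limsup_iff_frequently_mem.1

theorem stmt15_general {I : Type*} [Countable I]
    {Ω : Type*} [MeasurableSpace Ω] (μ : Measure Ω) [IsProbabilityMeasure μ]
    (Ik : ℕ → Ω → Finset I)
    (hmeas : ∀ (k : ℕ) (J : Finset I), MeasurableSet {ω | Ik k ω = J})
    -- identically distributed
    (hident : ∀ (k n : ℕ) (J : Finset I), μ {ω | Ik k ω = J} = μ {ω | Ik n ω = J})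
    -- independent
    (hindep : ∀ (K : Finset ℕ) (J : ℕ → Finset I),
      μ (⋂ k ∈ K, {ω | Ik k ω = J k}) = ∏ k ∈ K, μ {ω | Ik k ω = J k})
    (I' : Set I)
    (hpos : ∀ i ∈ I', ∀ k, 0 < μ {ω | i ∈ Ik k ω}) :
    μ {ω | ∀ n : ℕ, ∀ i ∈ I', ∃ k, n ≤ k ∧ i ∈ Ik k ω} = 1 := by
  have hfreq : ∀ i ∈ I', ∀ᵐ ω ∂μ, ∃ᶠ k in atTop, i ∈ Ik k ω := fun i hi =>
    ae_frequently_mem_of_iid (s := {J | i ∈ J}) hmeas (fun k => hident k 0) hindep (hpos i hi 0)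
  have hae : ∀ᵐ ω ∂μ, ∀ n : ℕ, ∀ i ∈ I', ∃ k, n ≤ k ∧ i ∈ Ik k ω := by
    filter_upwards [(ae_ball_iff I'.to_countable).2 hfreq] with ω hω n i hi
    exact frequently_atTop.1 (hω i hi) n
  rw [measure_congr (eventuallyEq_univ.2 hae), measure_univ]

/-- Lemma 5.3: a random control sequence is almost surely repetitive in the set `I'` of
indices which are sampled with positive probability. -/
theorem stmt15 {I : Type*} [Countable I]
    {Ω : Type*} [MeasurableSpace Ω] (μ : Measure Ω) [IsProbabilityMeasure μ]
    (Ik : ℕ → Ω → Finset I)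
    (hne : ∀ k ω, (Ik k ω).Nonempty)
    (M : ℕ) (hM : ∀ k ω, (Ik k ω).card ≤ M)
    (hmeas : ∀ (k : ℕ) (J : Finset I), MeasurableSet {ω | Ik k ω = J})
    -- identically distributed
    (hident : ∀ (k n : ℕ) (J : Finset I), μ {ω | Ik k ω = J} = μ {ω | Ik n ω = J})
    -- independent
    (hindep : ∀ (K : Finset ℕ) (J : ℕ → Finset I),
      μ (⋂ k ∈ K, {ω | Ik k ω = J k}) = ∏ k ∈ K, μ {ω | Ik k ω = J k})
    (I' : Set I)
    (hpos : ∀ i ∈ I', ∀ k, 0 < μ {ω | i ∈ Ik k ω}) :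
    μ {ω | ∀ n : ℕ, ∀ i ∈ I', ∃ k, n ≤ k ∧ i ∈ Ik k ω} = 1 :=
  stmt15_general μ Ik hmeas hident hindep I' hpos
end
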